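/- arXiv:2008.01322 — 8 statements merged into one kernel-verified Lean document; each statement's English description precedes it below -/
import Mathlib

section
/- Let G be a simple graph on a vertices that is K4-free and in which no two triangles share a common edge. Then the number of edges of G is at most a³/(4a−3). -/
open SimpleGraph Finset

set_option maxHeartbeats 1000000 in
/-- Let `G` be a simple graph on `a ≥ 1` vertices that is `K₄`-free and in which
no two distinct triangles share a common edge. Then the number of edges of `G` is
at most `a³/(4a − 3)`. -/
theorem stmt_6 {V : Type*} [Fintype V] [DecidableEq V]
    (G : SimpleGraph V) [DecidableRel G.Adj]
    (a : ℕ) (ha : Fintype.card V = a) (ha1 : 1 ≤ a)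
    (hK4 : G.CliqueFree 4)
    (htri : ∀ t1 ∈ G.cliqueFinset 3, ∀ t2 ∈ G.cliqueFinset 3,
      t1 ≠ t2 → (t1 ∩ t2).card ≤ 1) :
    (G.edgeFinset.card : ℝ) ≤ (a : ℝ) ^ 3 / (4 * a - 3) := by
  classical
  set m := G.edgeFinset.card with hm
  set T := (G.cliqueFinset 3).card with hTdef
  set d : V → ℕ := fun v => G.degree v with hd
  set D : ℕ := ∑ v, d v ^ 2 with hD
  -- degree sum
  have h1 : ∑ v, d v = 2 * m := G.sum_degrees_eq_twice_card_edges
  -- Cauchy-Schwarz in ℕ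
  have h2 : (2 * m) ^ 2 ≤ a * D := by
    calc (2 * m) ^ 2 = (∑ v, d v) ^ 2 := by rw [h1]
    _ ≤ (Finset.univ.card : ℕ) * ∑ v : V, d v ^ 2 := sq_sum_le_card_mul_sum_sq
    _ = a * D := by rw [Finset.card_univ, ha]
  -- edge-disjoint triangles
  have hedt : G.EdgeDisjointTriangles := by
    intro s hs t ht hst
    intro x hx y hy
    by_contra hxy
    have hs' : s ∈ G.cliqueFinset 3 := mem_cliqueFinset_iff.2 hs
    have ht' : t ∈ G.cliqueFinset 3 := mem_cliqueFinset_iff.2 ht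
    have hcard := htri s hs' t ht' hst
    have : 1 < (s ∩ t).card := by
      refine Finset.one_lt_card.2 ⟨x, ?_, y, ?_, hxy⟩ <;>
        simp_all [Finset.mem_inter, Set.mem_inter_iff, Finset.mem_coe]
    omega
  have h3 : 3 * T ≤ m := hedt.card_edgeFinset_le
  -- auxiliary: building triangles
  have hmk3 : ∀ {u v w : V}, G.Adj u v → G.Adj u w → G.Adj v w →
      ({u, v, w} : Finset V) ∈ G.cliqueFinset 3 := by
    intro u v w h1 h2 h3
    exact mem_cliqueFinset_iff.2 (is3Clique_triple_iff.2 ⟨h1, h2, h3⟩)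
  -- triangle degree-sum bound
  have hBtri : ∀ t ∈ G.cliqueFinset 3, ∑ v ∈ t, d v ≤ a + 3 := by
    intro t ht
    have htc : t.card = 3 := (mem_cliqueFinset_iff.1 ht).2
    have hclique : G.IsClique t := (mem_cliqueFinset_iff.1 ht).1
    have ha3 : 3 ≤ a := by
      rw [← htc, ← ha, ← Finset.card_univ]
      exact Finset.card_le_card (Finset.subset_univ t)
    have step1 : ∑ v ∈ t, d v = ∑ x : V, (t.filter (fun v => G.Adj v x)).card := by
      simp_rw [hd, degree, neighborFinset_eq_filter, Finset.card_filter]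
      rw [Finset.sum_comm]
    rw [step1]
    have hsplit := Finset.sum_sdiff (f := fun x => (t.filter (fun v => G.Adj v x)).card)
      (Finset.subset_univ t)
    have hbound1 : ∑ x ∈ t, (t.filter (fun v => G.Adj v x)).card ≤ 6 := by
      have h2' : ∀ x ∈ t, (t.filter (fun v => G.Adj v x)).card ≤ 2 := by
        intro x hx
        have hsub : t.filter (fun v => G.Adj v x) ⊆ t.erase x := by
          intro v hv
          rw [Finset.mem_filter] at hv
          exact Finset.mem_erase.2 ⟨(hv.2).ne, hv.1⟩
        calc (t.filter (fun v => G.Adj v x)).card ≤ (t.erase x).card :=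
              Finset.card_le_card hsub
        _ = 2 := by rw [Finset.card_erase_of_mem hx, htc]
      calc ∑ x ∈ t, (t.filter (fun v => G.Adj v x)).card ≤ ∑ _x ∈ t, 2 :=
            Finset.sum_le_sum h2'
      _ = 6 := by rw [Finset.sum_const, htc, smul_eq_mul]
    have hbound0 : ∑ x ∈ Finset.univ \ t, (t.filter (fun v => G.Adj v x)).card
        ≤ (Finset.univ \ t).card * 1 := by
      have := Finset.sum_le_card_nsmul (Finset.univ \ t)
        (fun x => (t.filter (fun v => G.Adj v x)).card) 1 ?_
      · simpa using this
      intro x hx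
      have hxt : x ∉ t := (Finset.mem_sdiff.1 hx).2
      rw [Finset.card_le_one]
      intro u hu v hv
      rw [Finset.mem_filter] at hu hv
      by_contra huv
      have huv' : G.Adj u v := hclique hu.1 hv.1 huv
      have ht2 : ({u, v, x} : Finset V) ∈ G.cliqueFinset 3 :=
        hmk3 huv' hu.2 hv.2
      have hne : t ≠ ({u, v, x} : Finset V) := by
        intro hEq
        apply hxt
        rw [hEq]
        simp
      have hle := htri t ht _ ht2 hne
      have : 1 < (t ∩ ({u, v, x} : Finset V)).card := by
        refine Finset.one_lt_card.2 ⟨u, ?_, v, ?_, huv⟩ <;>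
          simp [Finset.mem_inter, hu.1, hv.1]
      omega
    have hcsd : (Finset.univ \ t).card = a - 3 := by
      rw [Finset.card_sdiff_of_subset (Finset.subset_univ t), Finset.card_univ, ha, htc]
    calc ∑ x : V, (t.filter (fun v => G.Adj v x)).card
        = ∑ x ∈ Finset.univ \ t, (t.filter (fun v => G.Adj v x)).card
          + ∑ x ∈ t, (t.filter (fun v => G.Adj v x)).card := hsplit.symm
    _ ≤ (Finset.univ \ t).card * 1 + 6 := Nat.add_le_add hbound0 hbound1
    _ = (a - 3) * 1 + 6 := by rw [hcsd]
    _ ≤ a + 3 := by omega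
  -- the set of ordered adjacent pairs
  set P : Finset (V × V) := Finset.univ.filter (fun p : V × V => G.Adj p.1 p.2) with hP
  have sumP : ∀ f : V × V → ℕ,
      ∑ p ∈ P, f p = ∑ v, ∑ w ∈ G.neighborFinset v, f (v, w) := by
    intro f
    rw [hP, ← Finset.univ_product_univ, Finset.sum_filter, Finset.sum_product]
    refine Finset.sum_congr rfl fun v _ => ?_
    rw [neighborFinset_eq_filter, Finset.sum_filter]
  have hPcard : P.card = 2 * m := by
    rw [Finset.card_eq_sum_ones, sumP (fun _ => 1), ← h1]
    refine Finset.sum_congr rfl fun v _ => ?_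
    rw [Finset.sum_const, smul_eq_mul, mul_one]
    exact rfl
  have hswap : ∀ f : V × V → ℕ, ∑ p ∈ P, f p = ∑ p ∈ P, f p.swap := by
    intro f
    refine Finset.sum_equiv (Equiv.prodComm V V) ?_ ?_
    · intro p
      simp only [hP, Finset.mem_filter, Finset.mem_univ, true_and, Equiv.prodComm_apply,
        Prod.fst_swap, Prod.snd_swap]
      exact ⟨fun h => h.symm, fun h => h.symm⟩
    · intro p _
      simp
  have hfst : ∑ p ∈ P, d p.1 = D := by
    rw [sumP (fun p => d p.1), hD]
    refine Finset.sum_congr rfl fun v _ => ?_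
    calc ∑ w ∈ G.neighborFinset v, d (v, w).1
        = ∑ _w ∈ G.neighborFinset v, d v := rfl
    _ = d v ^ 2 := by rw [Finset.sum_const, smul_eq_mul, sq]; exact rfl
  have hsnd : ∑ p ∈ P, d p.2 = D := by
    rw [hswap (fun p => d p.2)]
    simpa using hfst
  have h2D : ∑ p ∈ P, (d p.1 + d p.2) = 2 * D := by
    rw [Finset.sum_add_distrib, hfst, hsnd]; ring
  -- split P into triangle pairs and non-triangle pairs
  set Q : V × V → Prop := fun p => ∃ t ∈ G.cliqueFinset 3, p.1 ∈ t ∧ p.2 ∈ t with hQ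
  have hP1 : P.filter Q = (G.cliqueFinset 3).biUnion (fun t => t.offDiag) := by
    ext p
    simp only [Finset.mem_filter, Finset.mem_biUnion, Finset.mem_offDiag, hP, hQ,
      Finset.mem_univ, true_and]
    constructor
    · rintro ⟨hadj, t, ht, h1', h2'⟩
      exact ⟨t, ht, h1', h2', hadj.ne⟩
    · rintro ⟨t, ht, h1', h2', hne⟩
      have hclique : G.IsClique t := (mem_cliqueFinset_iff.1 ht).1
      exact ⟨hclique h1' h2' hne, t, ht, h1', h2'⟩
  have hdisjU : ∀ t1 ∈ G.cliqueFinset 3, ∀ t2 ∈ G.cliqueFinset 3, t1 ≠ t2 →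
      Disjoint t1.offDiag t2.offDiag := by
    intro t1 ht1 t2 ht2 hne
    rw [Finset.disjoint_left]
    intro p hp1 hp2
    rw [Finset.mem_offDiag] at hp1 hp2
    have hle := htri t1 ht1 t2 ht2 hne
    have : 1 < (t1 ∩ t2).card := by
      refine Finset.one_lt_card.2 ⟨p.1, ?_, p.2, ?_, hp1.2.2⟩ <;>
        simp [Finset.mem_inter, hp1.1, hp1.2.1, hp2.1, hp2.2.1]
    omega
  have hoffcard : ∀ t ∈ G.cliqueFinset 3, t.offDiag.card = 6 := by
    intro t ht
    have htc : t.card = 3 := (mem_cliqueFinset_iff.1 ht).2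
    rw [Finset.offDiag_card, htc]
  have hP1card : (P.filter Q).card = 6 * T := by
    rw [hP1, Finset.card_biUnion hdisjU, Finset.sum_congr rfl hoffcard,
      Finset.sum_const, smul_eq_mul, ← hTdef, mul_comm]
  -- sum over the ordered pairs of one triangle
  have hoffsum : ∀ t ∈ G.cliqueFinset 3,
      ∑ p ∈ t.offDiag, (d p.1 + d p.2) = 4 * ∑ v ∈ t, d v := by
    intro t ht
    have htc : t.card = 3 := (mem_cliqueFinset_iff.1 ht).2
    have hfull : ∑ p ∈ t ×ˢ t, (d p.1 + d p.2) = 6 * ∑ v ∈ t, d v := by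
      rw [Finset.sum_product]
      calc ∑ u ∈ t, ∑ v ∈ t, (d u + d v)
          = ∑ u ∈ t, (3 * d u + ∑ v ∈ t, d v) := by
            refine Finset.sum_congr rfl fun u _ => ?_
            rw [Finset.sum_add_distrib, Finset.sum_const, htc, smul_eq_mul]
      _ = 6 * ∑ v ∈ t, d v := by
            rw [Finset.sum_add_distrib, ← Finset.mul_sum, Finset.sum_const, htc,
              smul_eq_mul]
            ring
    have hdiagsum : ∑ p ∈ t.diag, (d p.1 + d p.2) = 2 * ∑ v ∈ t, d v := by
      rw [Finset.sum_diag, two_mul, ← Finset.sum_add_distrib]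
    have hsplit := Finset.sum_filter_add_sum_filter_not (t ×ˢ t)
      (fun p : V × V => p.1 = p.2) (fun p => d p.1 + d p.2)
    have e1 : (t ×ˢ t).filter (fun p : V × V => p.1 = p.2) = t.diag := by
      ext p
      simp only [Finset.mem_filter, Finset.mem_product, Finset.mem_diag]
      constructor
      · rintro ⟨⟨h1', _⟩, h3'⟩; exact ⟨h1', h3'⟩
      · rintro ⟨h1', h3'⟩; exact ⟨⟨h1', h3' ▸ h1'⟩, h3'⟩
    have e2 : (t ×ˢ t).filter (fun p : V × V => ¬ p.1 = p.2) = t.offDiag := by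
      ext p
      simp only [Finset.mem_filter, Finset.mem_product, Finset.mem_offDiag]
      constructor
      · rintro ⟨⟨h1', h2'⟩, h3'⟩; exact ⟨h1', h2', h3'⟩
      · rintro ⟨h1', h2', h3'⟩; exact ⟨⟨h1', h2'⟩, h3'⟩
    rw [e1, e2, hdiagsum, hfull] at hsplit
    omega
  have hsum1 : ∑ p ∈ P.filter Q, (d p.1 + d p.2) ≤ T * (4 * (a + 3)) := by
    rw [hP1, Finset.sum_biUnion (fun x hx y hy hne =>
      hdisjU x (by simpa using hx) y (by simpa using hy) hne)]
    calc ∑ t ∈ G.cliqueFinset 3, ∑ p ∈ t.offDiag, (d p.1 + d p.2)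
        = ∑ t ∈ G.cliqueFinset 3, 4 * ∑ v ∈ t, d v := Finset.sum_congr rfl hoffsum
    _ ≤ ∑ _t ∈ G.cliqueFinset 3, 4 * (a + 3) :=
        Finset.sum_le_sum fun t ht => Nat.mul_le_mul_left 4 (hBtri t ht)
    _ = T * (4 * (a + 3)) := by rw [Finset.sum_const, smul_eq_mul, ← hTdef]
  have hsum0 : ∑ p ∈ P.filter (fun p => ¬ Q p), (d p.1 + d p.2)
      ≤ (P.filter (fun p => ¬ Q p)).card * a := by
    have key : ∀ p ∈ P.filter (fun p => ¬ Q p), d p.1 + d p.2 ≤ a := by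
      intro p hp
      rw [Finset.mem_filter] at hp
      obtain ⟨hpP, hnQ⟩ := hp
      simp only [hQ] at hnQ
      have hadj : G.Adj p.1 p.2 := by
        have := hpP
        rw [hP, Finset.mem_filter] at this
        exact this.2
      have hdisjN : Disjoint (G.neighborFinset p.1) (G.neighborFinset p.2) := by
        rw [Finset.disjoint_left]
        intro x hx1 hx2
        rw [SimpleGraph.mem_neighborFinset] at hx1 hx2
        exact hnQ ⟨{p.1, p.2, x}, hmk3 hadj hx1 hx2, by simp, by simp⟩
      calc d p.1 + d p.2 = (G.neighborFinset p.1 ∪ G.neighborFinset p.2).card :=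
            (Finset.card_union_of_disjoint hdisjN).symm
      _ ≤ (Finset.univ : Finset V).card := Finset.card_le_card (Finset.subset_univ _)
      _ = a := by rw [Finset.card_univ, ha]
    simpa using Finset.sum_le_card_nsmul _ _ a key
  -- the key inequality : 2D + 6Ta ≤ 4T(a+3) + 2ma
  have hkey : 2 * D + 6 * T * a ≤ 4 * T * (a + 3) + 2 * m * a := by
    have hsplitsum : ∑ p ∈ P.filter Q, (d p.1 + d p.2)
        + ∑ p ∈ P.filter (fun p => ¬ Q p), (d p.1 + d p.2) = 2 * D := by
      rw [Finset.sum_filter_add_sum_filter_not, h2D]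
    have hcsum : (P.filter Q).card + (P.filter (fun p => ¬ Q p)).card = 2 * m := by
      rw [Finset.card_filter_add_card_filter_not, hPcard]
    have hc0 : (P.filter (fun p => ¬ Q p)).card + 6 * T = 2 * m := by
      rw [← hP1card]; omega
    have e1 : (P.filter (fun p => ¬ Q p)).card * a + 6 * T * a = 2 * m * a := by
      rw [← Nat.add_mul, hc0]
    calc 2 * D + 6 * T * a
        = (∑ p ∈ P.filter Q, (d p.1 + d p.2)
            + ∑ p ∈ P.filter (fun p => ¬ Q p), (d p.1 + d p.2)) + 6 * T * a := by
          rw [hsplitsum]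
    _ ≤ (T * (4 * (a + 3)) + (P.filter (fun p => ¬ Q p)).card * a) + 6 * T * a :=
          Nat.add_le_add_right (Nat.add_le_add hsum1 hsum0) _
    _ = T * (4 * (a + 3)) + ((P.filter (fun p => ¬ Q p)).card * a + 6 * T * a) := by
          ring
    _ = T * (4 * (a + 3)) + 2 * m * a := by rw [e1]
    _ = 4 * T * (a + 3) + 2 * m * a := by ring
  -- pass to the reals
  clear sumP hswap hfst hsnd h2D hP1 hdisjU hoffcard hP1card hsum1 hsum0 hPcard hBtri hmk3 h1
  clear hP hQ hoffsum hedt hK4 htri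
  clear_value m T d D P Q
  clear P Q
  clear hd hD hTdef
  clear d
  have hN1 : (1 : ℝ) ≤ (a : ℝ) := by exact_mod_cast ha1
  have hTr : (0 : ℝ) ≤ (T : ℝ) := Nat.cast_nonneg T
  have hDr : (0 : ℝ) ≤ (D : ℝ) := Nat.cast_nonneg D
  have hMr : (0 : ℝ) ≤ (m : ℝ) := Nat.cast_nonneg m
  have H2 : (4 : ℝ) * (m : ℝ) ^ 2 ≤ (a : ℝ) * (D : ℝ) := by
    have h2' := h2
    have : ((2 * m) ^ 2 : ℝ) ≤ (a : ℝ) * (D : ℝ) := by exact_mod_cast h2'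
    nlinarith [this]
  have H3 : (3 : ℝ) * (T : ℝ) ≤ (m : ℝ) := by exact_mod_cast h3
  have H4 : (2 : ℝ) * (D : ℝ) + 6 * (T : ℝ) * (a : ℝ)
      ≤ 4 * (T : ℝ) * ((a : ℝ) + 3) + 2 * (m : ℝ) * (a : ℝ) := by
    have hkey' := hkey
    have : ((2 * D + 6 * T * a : ℕ) : ℝ) ≤ ((4 * T * (a + 3) + 2 * m * a : ℕ) : ℝ) := by
      exact_mod_cast hkey'
    push_cast at this
    linarith [this]
  have hpos : (0 : ℝ) < 4 * (a : ℝ) - 3 := by linarith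
  rw [le_div_iff₀ hpos]
  rcases le_or_gt a 2 with hsmall | hbig
  · -- tiny cases a = 1, 2
    have hch := G.card_edgeFinset_le_card_choose_two
    rw [ha] at hch
    interval_cases a
    · have hc : Nat.choose 1 2 = 0 := rfl
      rw [hc] at hch
      rw [← hm] at hch
      have hm0 : m = 0 := Nat.le_zero.1 hch
      rw [hm0]
      norm_num
    · have hc : Nat.choose 2 2 = 1 := rfl
      rw [hc] at hch
      rw [← hm] at hch
      have hm1r : (m : ℝ) ≤ 1 := by exact_mod_cast hch
      push_cast
      nlinarith [hm1r]
  · have h3a : 3 ≤ a := hbig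
    have hN3 : (3 : ℝ) ≤ (a : ℝ) := by exact_mod_cast h3a
    have hD1 : (D : ℝ) ≤ (m : ℝ) * a + (6 - (a : ℝ)) * T := by linarith [H4]
    rcases Nat.eq_zero_or_pos m with h0 | hposm
    · rw [h0]
      push_cast
      have h0' : (0 : ℝ) ≤ (a : ℝ) ^ 3 := by positivity
      simp only [zero_mul]
      exact h0'
    · have hm1 : (1 : ℝ) ≤ (m : ℝ) := by exact_mod_cast hposm
      rcases le_or_gt a 5 with hmid | hlarge
      · have hN5 : (a : ℝ) ≤ 5 := by exact_mod_cast hmid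
        have k1 : (4 : ℝ) * (m : ℝ) ^ 2
            ≤ (m : ℝ) * (a : ℝ) ^ 2 + (6 - (a : ℝ)) * (a : ℝ) * T := by
          linarith [mul_le_mul_of_nonneg_left hD1 (by linarith : (0 : ℝ) ≤ (a : ℝ)), H2]
        have hTm : (T : ℝ) ≤ (m : ℝ) / 3 := by linarith
        have hnn : (0 : ℝ) ≤ (6 - (a : ℝ)) * (a : ℝ) := by nlinarith
        have k1' : (4 : ℝ) * (m : ℝ) ^ 2
            ≤ (m : ℝ) * (a : ℝ) ^ 2 + (6 - (a : ℝ)) * (a : ℝ) * ((m : ℝ) / 3) := by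
          linarith [mul_le_mul_of_nonneg_left hTm hnn, k1]
        have k2 : (12 : ℝ) * (m : ℝ) ≤ 2 * (a : ℝ) ^ 2 + 6 * (a : ℝ) := by
          nlinarith [k1', hm1]
        nlinarith [k2, hpos.le,
          mul_nonneg (mul_nonneg (by linarith : (0 : ℝ) ≤ (a : ℝ))
            (by linarith : (0 : ℝ) ≤ (a : ℝ) - 3)) (by linarith : (0 : ℝ) ≤ 2 * (a : ℝ) - 3)]
      · have hN6 : (6 : ℝ) ≤ (a : ℝ) := by exact_mod_cast hlarge
        have hDma : (D : ℝ) ≤ (m : ℝ) * (a : ℝ) := by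
          linarith [hD1, mul_nonneg hTr (by linarith : (0 : ℝ) ≤ (a : ℝ) - 6)]
        have k : (4 : ℝ) * (m : ℝ) ≤ (a : ℝ) ^ 2 := by
          nlinarith [H2, hDma, hm1, mul_le_mul_of_nonneg_left hDma
            (by linarith : (0 : ℝ) ≤ (a : ℝ))]
        nlinarith [k, hpos.le, sq_nonneg (a : ℝ)]
end

section
/- Every K4-free simple graph on n vertices has at most n²/3 edges (Turán's theorem for K4). -/
open SimpleGraph Finset

theorem SimpleGraph.CliqueFree.mul_card_edgeFinset_le {V : Type*} [Fintype V]
    {G : SimpleGraph V} [DecidableRel G.Adj] {r : ℕ} (hr : 0 < r)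
    (hfree : G.CliqueFree (r + 1)) :
    2 * r * #G.edgeFinset ≤ (r - 1) * Fintype.card V ^ 2 := by
  obtain ⟨H, _, hH⟩ := exists_isTuranMaximal (V := V) hr
  calc 2 * r * #G.edgeFinset
      ≤ 2 * r * #H.edgeFinset := Nat.mul_le_mul_left _ (hH.2 hfree)
    _ = 2 * r * #(turanGraph (Fintype.card V) r).edgeFinset := by
      rw [hH.nonempty_iso_turanGraph.some.card_edgeFinset_eq]
    _ ≤ (r - 1) * Fintype.card V ^ 2 := mul_card_edgeFinset_turanGraph_le

theorem stmt_8_general {V : Type*} [Fintype V]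
    (G : SimpleGraph V) [DecidableRel G.Adj]
    (n : ℕ) (hn : Fintype.card V = n)
    (hfree : G.CliqueFree 4) :
    (G.edgeFinset.card : ℝ) ≤ (n : ℝ) ^ 2 / 3 := by
  have h : 2 * 3 * #G.edgeFinset ≤ (3 - 1) * n ^ 2 :=
    hn ▸ hfree.mul_card_edgeFinset_le three_pos
  have h' : (6 * #G.edgeFinset : ℝ) ≤ 2 * (n : ℝ) ^ 2 := by exact_mod_cast h
  linarith

/-- Turán's theorem for `K₄`: every `K₄`-free simple graph on `n` vertices has at
most `n²/3` edges. -/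
theorem stmt_8 {V : Type*} [Fintype V] [DecidableEq V]
    (G : SimpleGraph V) [DecidableRel G.Adj]
    (n : ℕ) (hn : Fintype.card V = n)
    (hfree : G.CliqueFree 4) :
    (G.edgeFinset.card : ℝ) ≤ (n : ℝ) ^ 2 / 3 :=
  stmt_8_general G n hn hfree
end

section
/- Let G be a bipartite graph with variable nodes of degree γ ≥ 3 each, check nodes of degree 1 or 2, such that G is 4-cycle free and every 8-cycle of G is chordless. If G has a variable nodes, b degree-1 check nodes, and b < a, then a ≥ 2γ − 2. -/
/-!
Pass to the variable-node graph `H`. Four-cycle freeness makes the `H`-degree of a variable node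
equal to its number of degree-2 checks, so `H`-degrees are at most `γ` and sum to `aγ − b > a(γ − 1)`;
hence some variable node `v` has `H`-degree `γ`. Chordless 8-cycles mean that no edge of `H` lies in
two triangles, so each neighbour `u` of `v` shares at most one neighbour with `v` and has degree at
most `a + 1 − γ`. Summing over the neighbours of `v` and over the remaining nodes gives
`aγ − b ≤ γ(2a − 2γ + 1)`, which together with `b < a` forces `a ≥ 2γ − 2`.
-/

open SimpleGraph Finset

/-- A cycle (given as a closed walk) in a graph has a chord if either there is an
edge of the graph between two vertices of the cycle that is not an edge of the cycle,
or there is a vertex outside the cycle adjacent to two distinct vertices of the cycle. -/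
def HasChord {V : Type*} (G : SimpleGraph V) {v : V} (c : G.Walk v v) : Prop :=
  (∃ x ∈ c.support, ∃ y ∈ c.support, G.Adj x y ∧ s(x, y) ∉ c.edges) ∨
  (∃ w, w ∉ c.support ∧ ∃ x ∈ c.support, ∃ y ∈ c.support, x ≠ y ∧ G.Adj w x ∧ G.Adj w y)

namespace SimpleGraph

variable {V : Type*} {G : SimpleGraph V}

theorem commonNeighbors_subsingleton_of_forall_isCycle_length_ne_four
    (h4 : ∀ (v : V) (c : G.Walk v v), c.IsCycle → c.length ≠ 4) {u v : V} (huv : u ≠ v) :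
    (G.commonNeighbors u v).Subsingleton := by
  rintro c ⟨hcu, hcv⟩ c' ⟨hc'u, hc'v⟩
  by_contra hcc
  rw [mem_neighborSet] at hcu hcv hc'u hc'v
  refine h4 u (.cons hcu (.cons hcv.symm (.cons hc'v (.cons hc'u.symm .nil)))) ?_ rfl
  simp [Walk.cons_isCycle_iff, Walk.cons_isPath_iff]
  grind [Adj.ne]

variable [Fintype V] [DecidableEq V] [DecidableRel G.Adj]

theorem ne_of_adj_of_degree_le_two {c c' p q r : V} (hc : G.degree c ≤ 2) (hp : G.Adj c p)
    (hq : G.Adj c q) (hr : G.Adj c' r) (hpq : p ≠ q) (hrp : r ≠ p) (hrq : r ≠ q) : c ≠ c' := by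
  rintro rfl
  have hsub : {r, p, q} ⊆ G.neighborFinset c := by simp [insert_subset_iff, hp, hq, hr]
  have := card_le_card hsub
  rw [card_insert_of_notMem (by simp [hrp, hrq]), card_pair hpq,
    card_neighborFinset_eq_degree] at this
  omega

theorem two_mul_sub_two_le_card_of_sum_degree {S : Finset V} {γ : ℕ}
    (hS : ∀ v, G.neighborFinset v ⊆ S) (hdeg : ∀ v ∈ S, G.degree v ≤ γ)
    (hinter : ∀ x y, G.Adj x y → #(G.neighborFinset x ∩ G.neighborFinset y) ≤ 1)
    (hsum : #S * γ < ∑ v ∈ S, G.degree v + #S) : 2 * γ - 2 ≤ #S := by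
  obtain ⟨v, hvS, hγv⟩ : ∃ v ∈ S, γ < G.degree v + 1 :=
    exists_lt_of_sum_lt (by simpa [sum_add_distrib, mul_comm] using hsum)
  have hv : #(G.neighborFinset v) = γ := by
    rw [card_neighborFinset_eq_degree]; exact le_antisymm (hdeg v hvS) (by omega)
  have hsumN : ∑ u ∈ G.neighborFinset v, G.degree u + γ * γ ≤ γ * (#S + 1) := by
    calc _ = ∑ u ∈ G.neighborFinset v, (G.degree u + γ) := by
          rw [sum_add_distrib, sum_const, hv, smul_eq_mul]
      _ ≤ ∑ u ∈ G.neighborFinset v, (#S + 1) := by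
          refine sum_le_sum fun u hu => ?_
          have hunion := card_union_add_card_inter (G.neighborFinset u) (G.neighborFinset v)
          have hsub := card_le_card (union_subset (hS u) (hS v))
          have hcommon := hinter u v ((mem_neighborFinset ..).1 hu).symm
          rw [G.card_neighborFinset_eq_degree u] at hunion
          omega
      _ = γ * (#S + 1) := by rw [sum_const, hv, smul_eq_mul]
  have hsumRest : ∑ u ∈ S \ G.neighborFinset v, G.degree u + γ * γ ≤ #S * γ := by
    calc _ ≤ ∑ u ∈ S \ G.neighborFinset v, γ + γ * γ := by
          gcongr with u hu; exact hdeg u (mem_sdiff.1 hu).1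
      _ = #S * γ := by
          rw [sum_const, smul_eq_mul, ← hv, ← add_mul, card_sdiff_add_card_eq_card (hS v)]
  rw [← sum_sdiff (hS v)] at hsum
  by_contra! hsmall
  have h2γ : #S + 3 ≤ 2 * γ := by omega
  nlinarith

end SimpleGraph

/-- Once check nodes have degree at most two, this is the variable-node graph of the paper:
degree-2 checks become edges and degree-1 checks disappear. -/
def vnGraph {V : Type*} (G : SimpleGraph V) (isVar : V → Prop) : SimpleGraph V where
  Adj x y := x ≠ y ∧ isVar x ∧ isVar y ∧ ∃ c, ¬ isVar c ∧ G.Adj c x ∧ G.Adj c y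
  symm := ⟨fun _ _ ⟨hne, hx, hy, c, hc, hcx, hcy⟩ => ⟨hne.symm, hy, hx, c, hc, hcy, hcx⟩⟩
  loopless := ⟨fun _ h => h.1 rfl⟩

section TannerGraph

variable {V : Type*} {G : SimpleGraph V} {isVar : V → Prop}

theorem vnGraph_adj {x y : V} :
    (vnGraph G isVar).Adj x y ↔
      x ≠ y ∧ isVar x ∧ isVar y ∧ ∃ c, ¬ isVar c ∧ G.Adj c x ∧ G.Adj c y :=
  Iff.rfl

variable [Fintype V] [DecidableRel G.Adj] [DecidablePred isVar]

theorem sum_card_leaves (hbip : ∀ x y, G.Adj x y → (isVar x ↔ ¬ isVar y)) :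
    ∑ v with isVar v, #{c ∈ G.neighborFinset v | G.degree c = 1} =
      #{w | ¬ isVar w ∧ G.degree w = 1} := by
  calc _ = ∑ v with isVar v,
        #(({w | ¬ isVar w ∧ G.degree w = 1} : Finset V).bipartiteAbove G.Adj v) := by
        refine sum_congr rfl fun v hv => congrArg card (ext fun c => ?_)
        simp only [mem_filter, mem_univ, true_and] at hv
        simp only [bipartiteAbove, mem_filter, mem_neighborFinset, mem_univ, true_and]
        grind
    _ = ∑ w with ¬ isVar w ∧ G.degree w = 1,
        #(({v | isVar v} : Finset V).bipartiteBelow G.Adj w) :=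
        sum_card_bipartiteAbove_eq_sum_card_bipartiteBelow _
    _ = ∑ w with ¬ isVar w ∧ G.degree w = 1, 1 := by
        refine sum_congr rfl fun w hw => ?_
        simp only [mem_filter, mem_univ, true_and] at hw
        rw [← hw.2, ← card_neighborFinset_eq_degree]
        congr 1; ext v
        simp only [bipartiteBelow, mem_filter, mem_neighborFinset, mem_univ, true_and]
        grind [adj_comm]
    _ = _ := (card_eq_sum_ones _).symm

variable [DecidableEq V]

instance : DecidableRel (vnGraph G isVar).Adj :=
  fun _ _ => decidable_of_iff _ vnGraph_adj.symm

theorem vnGraph_neighborFinset (hbip : ∀ x y, G.Adj x y → (isVar x ↔ ¬ isVar y)) {v : V}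
    (hv : isVar v) :
    (vnGraph G isVar).neighborFinset v =
      (G.neighborFinset v).biUnion fun c => (G.neighborFinset c).erase v := by
  ext u
  simp only [mem_neighborFinset, mem_biUnion, mem_erase, vnGraph_adj]
  constructor
  · rintro ⟨hvu, -, -, c, -, hcv, hcu⟩
    exact ⟨c, hcv.symm, Ne.symm hvu, hcu⟩
  · rintro ⟨c, hvc, huv, hcu⟩
    have hc : ¬ isVar c := (hbip v c hvc).1 hv
    exact ⟨Ne.symm huv, hv, by simpa [hc] using hbip u c hcu.symm, c, hc, hvc.symm, hcu⟩

theorem vnGraph_degree (hbip : ∀ x y, G.Adj x y → (isVar x ↔ ¬ isVar y))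
    (h4 : ∀ (v : V) (c : G.Walk v v), c.IsCycle → c.length ≠ 4) {v : V} (hv : isVar v) :
    (vnGraph G isVar).degree v = ∑ c ∈ G.neighborFinset v, (G.degree c - 1) := by
  rw [← card_neighborFinset_eq_degree, vnGraph_neighborFinset hbip hv, card_biUnion]
  · refine sum_congr rfl fun c hc => ?_
    rw [card_erase_of_mem (by simpa [adj_comm] using hc), card_neighborFinset_eq_degree]
  · intro c hc c' hc' hcc
    refine disjoint_left.2 fun u hu hu' => hcc ?_
    simp only [mem_erase, mem_neighborFinset] at hu hu'
    exact commonNeighbors_subsingleton_of_forall_isCycle_length_ne_four h4 hu.1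
      ⟨hu.2.symm, (mem_neighborFinset ..).1 hc⟩ ⟨hu'.2.symm, (mem_neighborFinset ..).1 hc'⟩

theorem vnGraph_degree_add_card_leaves (hbip : ∀ x y, G.Adj x y → (isVar x ↔ ¬ isVar y))
    (hdegC : ∀ w, ¬ isVar w → G.degree w = 1 ∨ G.degree w = 2)
    (h4 : ∀ (v : V) (c : G.Walk v v), c.IsCycle → c.length ≠ 4) {v : V} (hv : isVar v) :
    (vnGraph G isVar).degree v + #{c ∈ G.neighborFinset v | G.degree c = 1} = G.degree v := by
  rw [vnGraph_degree hbip h4 hv, card_filter, ← sum_add_distrib,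
    ← card_neighborFinset_eq_degree, card_eq_sum_ones]
  refine sum_congr rfl fun c hc => ?_
  rcases hdegC c ((hbip v c ((mem_neighborFinset ..).1 hc)).1 hv) with h | h <;> simp [h]

/-- Two common neighbours `z ≠ w` of an edge `x y` would give the 8-cycle `x z y w` (through the
checks joining them), and the check joining `x` and `y` would be a chord of it. -/
theorem card_vnGraph_neighborFinset_inter_le_one
    (hdegC : ∀ w, ¬ isVar w → G.degree w = 1 ∨ G.degree w = 2)
    (h8 : ∀ (v : V) (c : G.Walk v v), c.IsCycle → c.length = 8 → ¬ HasChord G c)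
    {x y : V} (hxy : (vnGraph G isVar).Adj x y) :
    #((vnGraph G isVar).neighborFinset x ∩ (vnGraph G isVar).neighborFinset y) ≤ 1 := by
  refine card_le_one.2 fun z hz w hw => ?_
  by_contra hzw
  simp only [mem_inter, mem_neighborFinset, vnGraph_adj] at hz hw
  obtain ⟨hxy, hx, hy, c0, hc0, hc0x, hc0y⟩ := hxy
  obtain ⟨⟨hxz, -, hz, c1, hc1, hc1x, hc1z⟩, hyz, -, -, c2, hc2, hc2y, hc2z⟩ := hz
  obtain ⟨⟨hxw, -, hw, c4, hc4, hc4x, hc4w⟩, hyw, -, -, c3, hc3, hc3y, hc3w⟩ := hw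
  have hne : ∀ {c c' p q r}, ¬ isVar c → G.Adj c p → G.Adj c q → G.Adj c' r → p ≠ q → r ≠ p →
      r ≠ q → c ≠ c' := fun hc =>
    ne_of_adj_of_degree_le_two (by rcases hdegC _ hc with h | h <;> omega)
  have h01 := hne hc0 hc0x hc0y hc1z hxy hxz.symm hyz.symm
  have h02 := hne hc0 hc0x hc0y hc2z hxy hxz.symm hyz.symm
  have h03 := hne hc0 hc0x hc0y hc3w hxy hxw.symm hyw.symm
  have h04 := hne hc0 hc0x hc0y hc4w hxy hxw.symm hyw.symm
  have h12 := hne hc1 hc1x hc1z hc2y hxz hxy.symm hyz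
  have h13 := hne hc1 hc1x hc1z hc3y hxz hxy.symm hyz
  have h14 := hne hc1 hc1x hc1z hc4w hxz hxw.symm (Ne.symm hzw)
  have h23 := hne hc2 hc2y hc2z hc3w hyz hyw.symm (Ne.symm hzw)
  have h24 := hne hc2 hc2y hc2z hc4w hyz hyw.symm (Ne.symm hzw)
  have h34 := hne hc3 hc3y hc3w hc4x hyw hxy hxw
  let cyc : G.Walk x x := .cons hc1x.symm (.cons hc1z (.cons hc2z.symm (.cons hc2y
    (.cons hc3y.symm (.cons hc3w (.cons hc4w.symm (.cons hc4x .nil)))))))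
  refine h8 x cyc ?_ rfl (Or.inr ⟨c0, ?_, x, by simp [cyc], y, by simp [cyc], hxy, hc0x, hc0y⟩)
  · simp [cyc, Walk.cons_isCycle_iff, Walk.cons_isPath_iff]
    and_intros <;> grind
  · simp [cyc]
    and_intros <;> grind

end TannerGraph

theorem stmt_10_general {V : Type*} [Fintype V] [DecidableEq V]
    (G : SimpleGraph V) [DecidableRel G.Adj]
    (isVar : V → Prop) [DecidablePred isVar]
    (hbip : ∀ x y, G.Adj x y → (isVar x ↔ ¬ isVar y))
    (γ : ℕ)
    (hdegV : ∀ v, isVar v → G.degree v = γ)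
    (hdegC : ∀ w, ¬ isVar w → G.degree w = 1 ∨ G.degree w = 2)
    (h4 : ∀ (v : V) (c : G.Walk v v), c.IsCycle → c.length ≠ 4)
    (h8 : ∀ (v : V) (c : G.Walk v v), c.IsCycle → c.length = 8 → ¬ HasChord G c)
    (a b : ℕ)
    (ha : a = (univ.filter isVar).card)
    (hb : b = (univ.filter (fun w => ¬ isVar w ∧ G.degree w = 1)).card)
    (hba : b < a) :
    2 * γ - 2 ≤ a := by
  have hvar : ∀ v ∈ univ.filter isVar,
      (vnGraph G isVar).degree v + #{c ∈ G.neighborFinset v | G.degree c = 1} = γ :=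
    fun v hv => by
      rw [vnGraph_degree_add_card_leaves hbip hdegC h4 (mem_filter.1 hv).2,
        hdegV v (mem_filter.1 hv).2]
  have hsum := sum_congr rfl hvar
  rw [sum_add_distrib, sum_card_leaves hbip, sum_const, smul_eq_mul, ← hb, ← ha] at hsum
  subst ha
  refine two_mul_sub_two_le_card_of_sum_degree (fun v u hu => ?_)
    (fun v hv => by have := hvar v hv; omega)
    (fun _ _ => card_vnGraph_neighborFinset_inter_le_one hdegC h8) (by omega)
  simp only [mem_neighborFinset, vnGraph_adj, mem_filter, mem_univ, true_and] at hu ⊢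
  exact hu.2.2.1

/-- Let `G` be a bipartite (Tanner) graph whose variable nodes all have degree
`γ ≥ 3` and whose check nodes have degree 1 or 2, which is 4-cycle free and in which
every 8-cycle is chordless.  If `G` has `a` variable nodes and `b` degree-1 check
nodes with `b < a`, then `a ≥ 2γ − 2`. -/
theorem stmt_10 {V : Type*} [Fintype V] [DecidableEq V]
    (G : SimpleGraph V) [DecidableRel G.Adj]
    (isVar : V → Prop) [DecidablePred isVar]
    (hbip : ∀ x y, G.Adj x y → (isVar x ↔ ¬ isVar y))
    (γ : ℕ) (hγ : 3 ≤ γ)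
    (hdegV : ∀ v, isVar v → G.degree v = γ)
    (hdegC : ∀ w, ¬ isVar w → G.degree w = 1 ∨ G.degree w = 2)
    (h4 : ∀ (v : V) (c : G.Walk v v), c.IsCycle → c.length ≠ 4)
    (h8 : ∀ (v : V) (c : G.Walk v v), c.IsCycle → c.length = 8 → ¬ HasChord G c)
    (a b : ℕ)
    (ha : a = (univ.filter isVar).card)
    (hb : b = (univ.filter (fun w => ¬ isVar w ∧ G.degree w = 1)).card)
    (hba : b < a) :
    2 * γ - 2 ≤ a :=
  stmt_10_general G isVar hbip γ hdegV hdegC h4 h8 a b ha hb hba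
end

section
/- There is no (8,0) elementary trapping set containing a 6-cycle in a variable-regular Tanner graph with γ = 4, girth 6, in which all 8-cycles are chordless. Equivalently: there is no 4-regular simple graph on 8 vertices that contains a triangle, contains no two triangles sharing an edge, and is K4-free, such that the corresponding bipartite lift has only chordless 8-cycles; concretely, every 4-regular triangle-containing simple graph on 8 vertices contains either two triangles sharing an edge or a 4-cycle pattern corresponding to an 8-cycle with a chord. -/
open SimpleGraph Finset

/-- There is no `(8,0)` elementary trapping set containing a 6-cycle in a
variable-regular Tanner graph with `γ = 4`, girth 6, whose 8-cycles are all
chordless.  In terms of the variable-node graph: every 4-regular simple graph on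
8 vertices which contains a triangle and is `K₄`-free must contain two distinct
triangles sharing a common edge (a forbidden configuration corresponding to an
8-cycle with a chord). -/
theorem stmt_11 (H : SimpleGraph (Fin 8)) [DecidableRel H.Adj]
    (hreg : ∀ v, H.degree v = 4)
    (htri : ¬ H.CliqueFree 3)
    (hK4 : H.CliqueFree 4) :
    ∃ t1 ∈ H.cliqueFinset 3, ∃ t2 ∈ H.cliqueFinset 3,
      t1 ≠ t2 ∧ 2 ≤ (t1 ∩ t2).card := by
  by_contra hcon
  push_neg at hcon
  rw [CliqueFree] at htri
  push_neg at htri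
  obtain ⟨t, ht⟩ := htri
  obtain ⟨a, b, c, hab', hac', hbc', rfl⟩ := Finset.card_eq_three.mp ht.card_eq
  have hab : H.Adj a b := ht.1 (by simp) (by simp) hab'
  have hac : H.Adj a c := ht.1 (by simp) (by simp) hac'
  have hbc : H.Adj b c := ht.1 (by simp) (by simp) hbc'
  -- No other common neighbor of two triangle vertices
  have key : ∀ u v w x : Fin 8, H.Adj u v → H.Adj u w → H.Adj v w →
      H.Adj u x → H.Adj v x → x ≠ w → False := by
    intro u v w x huv huw hvw hux hvx hxw
    have h1 : ({u, v, w} : Finset (Fin 8)) ∈ H.cliqueFinset 3 := by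
      rw [mem_cliqueFinset_iff, is3Clique_triple_iff]; exact ⟨huv, huw, hvw⟩
    have h2 : ({u, v, x} : Finset (Fin 8)) ∈ H.cliqueFinset 3 := by
      rw [mem_cliqueFinset_iff, is3Clique_triple_iff]; exact ⟨huv, hux, hvx⟩
    have hxu : x ≠ u := fun h => H.irrefl (h ▸ hux)
    have hxv : x ≠ v := fun h => H.irrefl (h ▸ hvx)
    have hne : ({u, v, w} : Finset (Fin 8)) ≠ {u, v, x} := by
      intro h
      have hx : x ∈ ({u, v, w} : Finset (Fin 8)) := by rw [h]; simp
      simp only [mem_insert, mem_singleton] at hx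
      rcases hx with h | h | h
      · exact hxu h
      · exact hxv h
      · exact hxw h
    have hsub : ({u, v} : Finset (Fin 8)) ⊆ {u, v, w} ∩ {u, v, x} := by
      intro y hy
      simp only [mem_insert, mem_singleton] at hy
      simp only [mem_inter, mem_insert, mem_singleton]
      tauto
    have hcard2 : ({u, v} : Finset (Fin 8)).card = 2 := by
      rw [Finset.card_insert_of_notMem (by simp [H.ne_of_adj huv]), card_singleton]
    have h2le : 2 ≤ (({u, v, w} : Finset (Fin 8)) ∩ {u, v, x}).card := by
      have := Finset.card_le_card hsub
      omega
    have := hcon _ h1 _ h2 hne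
    omega
  -- Neighbor counting
  have hdeg : ∀ v, (H.neighborFinset v).card = 4 := fun v => by
    rw [H.card_neighborFinset_eq_degree]; exact hreg v
  set A := H.neighborFinset a \ {b, c} with hA
  set B := H.neighborFinset b \ {a, c} with hB
  set C := H.neighborFinset c \ {a, b} with hC
  have hcardA : A.card = 2 := by
    rw [hA, Finset.card_sdiff_of_subset (by
      intro y hy
      simp only [mem_insert, mem_singleton] at hy
      rcases hy with rfl | rfl
      · exact H.mem_neighborFinset a y |>.mpr hab
      · exact H.mem_neighborFinset a y |>.mpr hac)]
    rw [hdeg]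
    rw [Finset.card_insert_of_notMem (by simp [hbc']), card_singleton]
  have hcardB : B.card = 2 := by
    rw [hB, Finset.card_sdiff_of_subset (by
      intro y hy
      simp only [mem_insert, mem_singleton] at hy
      rcases hy with rfl | rfl
      · exact H.mem_neighborFinset b y |>.mpr hab.symm
      · exact H.mem_neighborFinset b y |>.mpr hbc)]
    rw [hdeg]
    rw [Finset.card_insert_of_notMem (by simp [hac']), card_singleton]
  have hcardC : C.card = 2 := by
    rw [hC, Finset.card_sdiff_of_subset (by
      intro y hy
      simp only [mem_insert, mem_singleton] at hy
      rcases hy with rfl | rfl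
      · exact H.mem_neighborFinset c y |>.mpr hac.symm
      · exact H.mem_neighborFinset c y |>.mpr hbc.symm)]
    rw [hdeg]
    rw [Finset.card_insert_of_notMem (by simp [hab']), card_singleton]
  have memA : ∀ x, x ∈ A → H.Adj a x ∧ x ≠ b ∧ x ≠ c ∧ x ≠ a := by
    intro x hx
    rw [hA, Finset.mem_sdiff, H.mem_neighborFinset] at hx
    simp only [mem_insert, mem_singleton, not_or] at hx
    exact ⟨hx.1, hx.2.1, hx.2.2, fun h => H.irrefl (h ▸ hx.1)⟩
  have memB : ∀ x, x ∈ B → H.Adj b x ∧ x ≠ a ∧ x ≠ c ∧ x ≠ b := by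
    intro x hx
    rw [hB, Finset.mem_sdiff, H.mem_neighborFinset] at hx
    simp only [mem_insert, mem_singleton, not_or] at hx
    exact ⟨hx.1, hx.2.1, hx.2.2, fun h => H.irrefl (h ▸ hx.1)⟩
  have memC : ∀ x, x ∈ C → H.Adj c x ∧ x ≠ a ∧ x ≠ b ∧ x ≠ c := by
    intro x hx
    rw [hC, Finset.mem_sdiff, H.mem_neighborFinset] at hx
    simp only [mem_insert, mem_singleton, not_or] at hx
    exact ⟨hx.1, hx.2.1, hx.2.2, fun h => H.irrefl (h ▸ hx.1)⟩
  have hdAB : Disjoint A B := by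
    rw [Finset.disjoint_left]
    intro x hxA hxB
    obtain ⟨h1, _, hc1, _⟩ := memA x hxA
    obtain ⟨h2, _, _, _⟩ := memB x hxB
    exact key a b c x hab hac hbc h1 h2 hc1
  have hdAC : Disjoint A C := by
    rw [Finset.disjoint_left]
    intro x hxA hxC
    obtain ⟨h1, hb1, _, _⟩ := memA x hxA
    obtain ⟨h2, _, _, _⟩ := memC x hxC
    exact key a c b x hac hab hbc.symm h1 h2 hb1
  have hdBC : Disjoint B C := by
    rw [Finset.disjoint_left]
    intro x hxB hxC
    obtain ⟨h1, ha1, _, _⟩ := memB x hxB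
    obtain ⟨h2, _, _, _⟩ := memC x hxC
    exact key b c a x hbc hab.symm hac.symm h1 h2 ha1
  have hdT : Disjoint ({a, b, c} : Finset (Fin 8)) (A ∪ B ∪ C) := by
    rw [Finset.disjoint_left]
    intro x hx hx2
    simp only [mem_insert, mem_singleton] at hx
    simp only [Finset.mem_union] at hx2
    rcases hx2 with (h | h) | h
    · obtain ⟨_, h1, h2, h3⟩ := memA x h; rcases hx with rfl | rfl | rfl <;> first | exact h1 rfl | exact h2 rfl | exact h3 rfl
    · obtain ⟨_, h1, h2, h3⟩ := memB x h; rcases hx with rfl | rfl | rfl <;> first | exact h1 rfl | exact h2 rfl | exact h3 rfl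
    · obtain ⟨_, h1, h2, h3⟩ := memC x h; rcases hx with rfl | rfl | rfl <;> first | exact h1 rfl | exact h2 rfl | exact h3 rfl
  have hcardabc : ({a, b, c} : Finset (Fin 8)).card = 3 := ht.card_eq
  have hcardU : (A ∪ B ∪ C).card = 6 := by
    rw [Finset.card_union_of_disjoint (by
      rw [Finset.disjoint_union_left]; exact ⟨hdAC, hdBC⟩),
      Finset.card_union_of_disjoint hdAB, hcardA, hcardB, hcardC]
  have htot : (({a, b, c} : Finset (Fin 8)) ∪ (A ∪ B ∪ C)).card = 9 := by
    rw [Finset.card_union_of_disjoint hdT, hcardabc, hcardU]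
  have hle : (({a, b, c} : Finset (Fin 8)) ∪ (A ∪ B ∪ C)).card ≤ 8 := by
    have := Finset.card_le_univ (({a, b, c} : Finset (Fin 8)) ∪ (A ∪ B ∪ C))
    simpa using this
  omega
end

section
/- Let G be a Tanner graph in which every variable node has degree ≥ γ ≥ 3, G is 4-cycle free, and every 8-cycle is chordless. Then the minimum distance of the associated code is at least 2γ; equivalently, every (a,0) trapping set (a set of a variable nodes inducing a subgraph with no odd-degree check node) satisfies a ≥ 2γ. -/
open SimpleGraph Finset

/-!
Every check adjacent to `S` has an even number of neighbours in `S`, so a check with a single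
neighbour in a set `A ⊆ S` (a private neighbour of `A`) has another neighbour in `S \ A`. If no
vertex of `S \ A` is adjacent to private neighbours of two different vertices of `A` (two private
neighbours of the same vertex cannot share one, there being no 4-cycle), these partners are
distinct. Two vertices of `A` share at most one check, so `A` has at least `|A| (γ + 1 - |A|)`
private neighbours and `|S| ≥ |A| + |A| (γ + 1 - |A|)`.

If the variable nodes of a 6-cycle lie in `S`, take `A` to be these three: the forbidden
configuration would be an 8-cycle with the third check of the 6-cycle as a chord, and
`|S| ≥ 3γ - 3 ≥ 2γ`. Otherwise take two variable nodes of `S` sharing a check: the forbidden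
configuration would now close a 6-cycle, and `|S| ≥ 2γ`.
-/

namespace SimpleGraph

variable {V : Type*}

theorem commonNeighbors_subsingleton_of_isCycle_length_ne_four {G : SimpleGraph V}
    (h4 : ∀ (v : V) (c : G.Walk v v), c.IsCycle → c.length ≠ 4) :
    Pairwise fun x y => (G.commonNeighbors x y).Subsingleton := by
  intro x y hxy a ⟨hxa, hya⟩ b ⟨hxb, hyb⟩
  rw [mem_neighborSet] at hxa hya hxb hyb
  by_contra hab
  refine h4 x (.cons hxa (.cons hya.symm (.cons hyb (.cons hxb.symm .nil)))) ?_ rfl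
  rw [Walk.cons_isCycle_iff, Walk.isPath_def]
  simp [hxy, hxy.symm, hab, hxa.ne, hxb.ne, hyb.ne, hxa.ne', hya.ne', hxb.ne']

section PrivateNeighbors

variable {G : SimpleGraph V} [DecidableRel G.Adj]

theorem exists_adj_mem_sdiff_of_even [DecidableEq V] {S A : Finset V} {f a : V} (hAS : A ⊆ S)
    (heven : Even #{x ∈ S | G.Adj f x}) (hfA : {x ∈ A | G.Adj f x} = {a}) :
    ∃ z ∈ S \ A, G.Adj f z := by
  have ha : a ∈ A ∧ G.Adj f a := mem_filter.1 (eq_singleton_iff_unique_mem.1 hfA).1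
  have hcard : 1 < #{x ∈ S | G.Adj f x} := by
    obtain ⟨k, hk⟩ := heven
    have : 0 < #{x ∈ S | G.Adj f x} := card_pos.2 ⟨a, mem_filter.2 ⟨hAS ha.1, ha.2⟩⟩
    omega
  obtain ⟨z, hz, hza⟩ := exists_mem_ne hcard a
  rw [mem_filter] at hz
  refine ⟨z, mem_sdiff.2 ⟨hz.1, fun hzA => hza ?_⟩, hz.2⟩
  have : z ∈ {x ∈ A | G.Adj f x} := mem_filter.2 ⟨hzA, hz.2⟩
  simpa [hfA] using this

variable [Fintype V]

def privateNeighborFinset (G : SimpleGraph V) [DecidableRel G.Adj] (A : Finset V) : Finset V :=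
  {f | #{a ∈ A | G.Adj f a} = 1}

@[simp]
theorem mem_privateNeighborFinset {A : Finset V} {f : V} :
    f ∈ G.privateNeighborFinset A ↔ #{a ∈ A | G.Adj f a} = 1 := by
  simp [privateNeighborFinset]

variable [DecidableEq V]

theorem neighborFinset_subset_privateNeighborFinset_union {A : Finset V} {a : V} (ha : a ∈ A) :
    G.neighborFinset a ⊆ {f ∈ G.privateNeighborFinset A | G.Adj f a} ∪
      (A.erase a).biUnion fun b => G.neighborFinset a ∩ G.neighborFinset b := by
  intro f hf
  rw [mem_neighborFinset] at hf
  by_cases hpriv : f ∈ G.privateNeighborFinset A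
  · exact mem_union_left _ (mem_filter.2 ⟨hpriv, hf.symm⟩)
  have : 1 < #{b ∈ A | G.Adj f b} := by
    have : 0 < #{b ∈ A | G.Adj f b} := card_pos.2 ⟨a, mem_filter.2 ⟨ha, hf.symm⟩⟩
    rw [mem_privateNeighborFinset] at hpriv
    omega
  obtain ⟨b, hb, hba⟩ := exists_mem_ne this a
  rw [mem_filter] at hb
  refine mem_union_right _ (mem_biUnion.2 ⟨b, mem_erase.2 ⟨hba, hb.1⟩, ?_⟩)
  simp [hf, hb.2.symm]

theorem sub_le_card_filter_privateNeighborFinset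
    (hG : Pairwise fun x y => (G.commonNeighbors x y).Subsingleton) {A : Finset V} {a : V}
    {γ : ℕ} (ha : a ∈ A) (hdeg : γ ≤ G.degree a) :
    γ + 1 - #A ≤ #{f ∈ G.privateNeighborFinset A | G.Adj f a} := by
  have hcommon : ∀ b ∈ A.erase a, #(G.neighborFinset a ∩ G.neighborFinset b) ≤ 1 := by
    intro b hb
    exact card_le_one.2 fun f hf g hg => hG (mem_erase.1 hb).1.symm
      (by simpa [mem_commonNeighbors] using hf) (by simpa [mem_commonNeighbors] using hg)
  have := (card_le_card (neighborFinset_subset_privateNeighborFinset_union (G := G) ha)).trans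
    (card_union_le _ _)
  have := card_biUnion_le_card_mul _ _ _ hcommon
  have := card_erase_add_one ha
  rw [← card_neighborFinset_eq_degree] at hdeg
  omega

theorem card_mul_le_card_privateNeighborFinset
    (hG : Pairwise fun x y => (G.commonNeighbors x y).Subsingleton) {A : Finset V} {γ : ℕ}
    (hdeg : ∀ a ∈ A, γ ≤ G.degree a) :
    #A * (γ + 1 - #A) ≤ #(G.privateNeighborFinset A) := by
  simpa using card_mul_le_card_mul (fun a f => G.Adj f a)
    (fun a ha => sub_le_card_filter_privateNeighborFinset hG ha (hdeg a ha))
    (fun f hf => (mem_privateNeighborFinset.1 hf).le)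

theorem card_privateNeighborFinset_le_card_sdiff
    (hG : Pairwise fun x y => (G.commonNeighbors x y).Subsingleton) {S A : Finset V}
    (hAS : A ⊆ S) (heven : ∀ f, ∀ a ∈ S, G.Adj f a → Even #{x ∈ S | G.Adj f x})
    (hdetour : ∀ a b f g z, a ≠ b → z ∈ S \ A → {x ∈ A | G.Adj f x} = {a} →
      {x ∈ A | G.Adj g x} = {b} → G.Adj f z → G.Adj g z → False) :
    #(G.privateNeighborFinset A) ≤ #(S \ A) := by
  have hpriv {f} (hf : f ∈ G.privateNeighborFinset A) : ∃ a, {x ∈ A | G.Adj f x} = {a} :=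
    card_eq_one.1 (mem_privateNeighborFinset.1 hf)
  refine card_le_card_of_forall_subsingleton G.Adj (fun f hf => ?_) (fun z hz => ?_)
  · obtain ⟨a, ha⟩ := hpriv hf
    have ha' : a ∈ A ∧ G.Adj f a := mem_filter.1 (eq_singleton_iff_unique_mem.1 ha).1
    exact exists_adj_mem_sdiff_of_even hAS (heven f a (hAS ha'.1) ha'.2) ha
  · rintro f ⟨hf, hfz⟩ g ⟨hg, hgz⟩
    obtain ⟨a, ha⟩ := hpriv hf
    obtain ⟨b, hb⟩ := hpriv hg
    obtain rfl : a = b := by_contra fun hab => hdetour a b f g z hab hz ha hb hfz hgz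
    have ha' : a ∈ A ∧ G.Adj f a := mem_filter.1 (eq_singleton_iff_unique_mem.1 ha).1
    have hb' : a ∈ A ∧ G.Adj g a := mem_filter.1 (eq_singleton_iff_unique_mem.1 hb).1
    have haz : a ≠ z := fun h => (mem_sdiff.1 hz).2 (h ▸ ha'.1)
    exact hG haz ⟨ha'.2.symm, hfz.symm⟩ ⟨hb'.2.symm, hgz.symm⟩

theorem card_add_card_mul_le_card
    (hG : Pairwise fun x y => (G.commonNeighbors x y).Subsingleton) {S A : Finset V} {γ : ℕ}
    (hAS : A ⊆ S) (hdeg : ∀ a ∈ A, γ ≤ G.degree a)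
    (heven : ∀ f, ∀ a ∈ S, G.Adj f a → Even #{x ∈ S | G.Adj f x})
    (hdetour : ∀ a b f g z, a ≠ b → z ∈ S \ A → {x ∈ A | G.Adj f x} = {a} →
      {x ∈ A | G.Adj g x} = {b} → G.Adj f z → G.Adj g z → False) :
    #A + #A * (γ + 1 - #A) ≤ #S := by
  have := card_mul_le_card_privateNeighborFinset hG hdeg
  have := card_privateNeighborFinset_le_card_sdiff hG hAS heven hdetour
  have := card_sdiff_add_card_eq_card hAS
  omega

end PrivateNeighbors

structure IsHexagon (G : SimpleGraph V) (x y : ZMod 3 → V) : Prop where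
  injective_left : x.Injective
  injective_right : y.Injective
  adj_left : ∀ i, G.Adj (x i) (y i)
  adj_right : ∀ i, G.Adj (y i) (x (i + 1))

theorem isHexagon_of_adj {G : SimpleGraph V} {x₀ x₁ x₂ y₀ y₁ y₂ : V}
    (hx : [x₀, x₁, x₂].Nodup) (hy : [y₀, y₁, y₂].Nodup)
    (h₀ : G.Adj x₀ y₀) (h₀' : G.Adj y₀ x₁) (h₁ : G.Adj x₁ y₁) (h₁' : G.Adj y₁ x₂)
    (h₂ : G.Adj x₂ y₂) (h₂' : G.Adj y₂ x₀) :
    G.IsHexagon ![x₀, x₁, x₂] ![y₀, y₁, y₂] := by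
  simp only [List.nodup_cons, List.mem_cons, List.not_mem_nil, not_or] at hx hy
  constructor
  · intro i j hij; fin_cases i <;> fin_cases j <;> simp_all <;> rfl
  · intro i j hij; fin_cases i <;> fin_cases j <;> simp_all <;> rfl
  · intro i; fin_cases i <;> simpa
  · intro i; fin_cases i <;> simpa

theorem IsHexagon.false_of_path {G : SimpleGraph V} {P : V → Prop}
    (hbip : ∀ a b, G.Adj a b → (P a ↔ ¬ P b))
    (h8 : ∀ (v : V) (c : G.Walk v v), c.IsCycle → c.length = 8 → ¬ HasChord G c)
    {x y : ZMod 3 → V} (H : G.IsHexagon x y) (hP : ∀ k, P (x k)) {i : ZMod 3} {f z g : V}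
    (hz : z ∉ Set.range x) (hf : f ∉ Set.range y) (hg : g ∉ Set.range y) (hfg : f ≠ g)
    (hxf : G.Adj (x i) f) (hfz : G.Adj f z) (hzg : G.Adj z g) (hgx : G.Adj g (x (i + 1))) :
    False := by
  have hPy (k) : ¬ P (y k) := (hbip _ _ (H.adj_left k)).1 (hP k)
  have hPf : ¬ P f := (hbip _ _ hxf).1 (hP i)
  have hPg : ¬ P g := fun h => (hbip _ _ hgx).1 h (hP _)
  have hPz : P z := not_not.1 fun h => h ((hbip _ _ hzg).2 hPg)
  have hne {a b} (ha : P a) (hb : ¬ P b) : a ≠ b := fun h => hb (h ▸ ha)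
  have hne' {a b} (ha : P a) (hb : ¬ P b) : b ≠ a := fun h => hb (h ▸ ha)
  have hz' (k) : z ≠ x k := fun h => hz ⟨k, h.symm⟩
  have hf' (k) : f ≠ y k := fun h => hf ⟨k, h.symm⟩
  have hg' (k) : g ≠ y k := fun h => hg ⟨k, h.symm⟩
  have hZ : (1 : ZMod 3) ≠ 0 ∧ (2 : ZMod 3) ≠ 0 ∧ (1 : ZMod 3) ≠ 2 := by decide
  have a6 : G.Adj (y (i + 1)) (x (i + 2)) := by
    simpa [add_assoc, one_add_one_eq_two] using H.adj_right (i + 1)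
  have a8 : G.Adj (y (i + 2)) (x i) := by
    simpa [add_assoc, show (2 + 1 : ZMod 3) = 0 from rfl] using H.adj_right (i + 2)
  -- `y i` lies off this 8-cycle and is adjacent to `x i` and `x (i + 1)`: a chord.
  let c : G.Walk (x i) (x i) :=
    .cons hxf <| .cons hfz <| .cons hzg <| .cons hgx <| .cons (H.adj_left _) <|
    .cons a6 <| .cons (H.adj_left _) <| .cons a8 .nil
  refine h8 _ c ?_ rfl
    (.inr ⟨y i, ?_, x i, ?_, x (i + 1), ?_, ?_, (H.adj_left i).symm, H.adj_right i⟩)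
  · rw [Walk.cons_isCycle_iff, Walk.isPath_def]
    simp [H.injective_left.eq_iff, H.injective_right.eq_iff, hne, hne', hP, hPy, hPz, hPf, hPg,
      hz', hf', hg', hfg, (hz' i).symm, hZ]
  · simp [c, H.injective_right.eq_iff, hne', hP, hPy, hPz, (hf' i).symm, (hg' i).symm, hZ]
  · simp [c]
  · simp [c]
  · simp [H.injective_left.eq_iff, hZ]

section Cases

variable [DecidableEq V] {G : SimpleGraph V} [DecidableRel G.Adj]

theorem IsHexagon.notMem_range_of_filter_eq_singleton {x y : ZMod 3 → V} (H : G.IsHexagon x y)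
    {f a : V} (h : {w ∈ univ.image x | G.Adj f w} = {a}) : f ∉ Set.range y := by
  rintro ⟨k, rfl⟩
  have huniq := (eq_singleton_iff_unique_mem.1 h).2
  have : x k = x (k + 1) :=
    (huniq _ (by simpa using (H.adj_left k).symm)).trans
      (huniq _ (by simpa using H.adj_right k)).symm
  exact absurd (H.injective_left this) (by generalize k = j; decide +revert)

theorem isHexagon_of_filter_eq_singleton {v u c f g z : V} (huv : u ≠ v) (hvc : G.Adj v c)
    (hcu : G.Adj c u) (hz : z ∉ ({v, u} : Finset V))
    (hf : {w ∈ ({v, u} : Finset V) | G.Adj f w} = {v})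
    (hg : {w ∈ ({v, u} : Finset V) | G.Adj g w} = {u}) (hfz : G.Adj f z) (hgz : G.Adj g z) :
    G.IsHexagon ![v, u, z] ![c, g, f] := by
  simp only [eq_singleton_iff_unique_mem, mem_filter, mem_insert, mem_singleton] at hf hg
  simp only [mem_insert, mem_singleton, not_or] at hz
  have hfu : ¬ G.Adj f u := fun h => huv (hf.2 u ⟨.inr rfl, h⟩)
  have hgv : ¬ G.Adj g v := fun h => huv (hg.2 v ⟨.inl rfl, h⟩).symm
  refine isHexagon_of_adj ?_ ?_ hvc hcu hg.1.2.symm hgz hfz.symm hf.1.2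
  · simp [huv.symm, Ne.symm hz.1, Ne.symm hz.2]
  · have hcg : c ≠ g := by rintro rfl; exact hgv hvc.symm
    have hcf : c ≠ f := by rintro rfl; exact hfu hcu
    have hgf : g ≠ f := by rintro rfl; exact hfu hg.1.2
    simp [hcg, hcf, hgf]

variable [Fintype V]

theorem IsHexagon.three_mul_le_card_add_three {P : V → Prop}
    (hbip : ∀ a b, G.Adj a b → (P a ↔ ¬ P b))
    (h8 : ∀ (v : V) (c : G.Walk v v), c.IsCycle → c.length = 8 → ¬ HasChord G c)
    (hG : Pairwise fun x y => (G.commonNeighbors x y).Subsingleton) {S : Finset V} {γ : ℕ}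
    (hdeg : ∀ a ∈ S, γ ≤ G.degree a)
    (heven : ∀ f, ∀ a ∈ S, G.Adj f a → Even #{x ∈ S | G.Adj f x})
    {x y : ZMod 3 → V} (H : G.IsHexagon x y) (hxS : ∀ k, x k ∈ S) (hP : ∀ k, P (x k)) :
    3 * γ ≤ #S + 3 := by
  have hAS : univ.image x ⊆ S := by simpa [image_subset_iff] using hxS
  have hA : #(univ.image x) = 3 := by rw [card_image_of_injective _ H.injective_left]; rfl
  have := card_add_card_mul_le_card hG hAS (fun a ha => hdeg a (hAS ha)) heven ?_
  · rw [hA] at this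
    omega
  rintro a b f g z hab hz hfa hgb hfz hgz
  have hf := H.notMem_range_of_filter_eq_singleton hfa
  have hg := H.notMem_range_of_filter_eq_singleton hgb
  simp only [eq_singleton_iff_unique_mem, mem_filter, mem_image, mem_univ, true_and] at hfa hgb
  obtain ⟨⟨⟨i, rfl⟩, hif⟩, -⟩ := hfa
  obtain ⟨⟨⟨j, rfl⟩, hjg⟩, hgu⟩ := hgb
  have hz' : z ∉ Set.range x := by simpa using (mem_sdiff.1 hz).2
  have hfg : f ≠ g := by rintro rfl; exact hab (hgu _ ⟨⟨i, rfl⟩, hif⟩)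
  have hij : i ≠ j := fun h => hab (h ▸ rfl)
  obtain rfl | rfl : j = i + 1 ∨ i = j + 1 := by generalize i = i', j = j' at hij; decide +revert
  · exact H.false_of_path hbip h8 hP hz' hf hg hfg hif.symm hfz hgz.symm hjg
  · exact H.false_of_path hbip h8 hP hz' hg hf hfg.symm hjg.symm hgz hfz.symm hif

theorem two_mul_le_card_of_forall_not_isHexagon
    (hG : Pairwise fun x y => (G.commonNeighbors x y).Subsingleton) {S : Finset V}
    (hS : S.Nonempty) {γ : ℕ} (hγ : 0 < γ) (hdeg : ∀ a ∈ S, γ ≤ G.degree a)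
    (heven : ∀ f, ∀ a ∈ S, G.Adj f a → Even #{x ∈ S | G.Adj f x})
    (hhex : ∀ x y, G.IsHexagon x y → ¬ ∀ k, x k ∈ S) :
    2 * γ ≤ #S := by
  obtain ⟨v, hv⟩ := hS
  obtain ⟨c, hvc⟩ := (G.degree_pos_iff_exists_adj v).1 (hγ.trans_le (hdeg v hv))
  obtain ⟨u, hu, hcu⟩ := exists_adj_mem_sdiff_of_even (a := v) (singleton_subset_iff.2 hv)
    (heven c v hv hvc.symm) (by simp [filter_singleton, hvc.symm])
  obtain ⟨hu, huv⟩ : u ∈ S ∧ u ≠ v := by simpa using hu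
  have hAS : ({v, u} : Finset V) ⊆ S := by simp [insert_subset_iff, hv, hu]
  have hdetour : ∀ f g z, z ∈ S \ {v, u} → {w ∈ ({v, u} : Finset V) | G.Adj f w} = {v} →
      {w ∈ ({v, u} : Finset V) | G.Adj g w} = {u} → G.Adj f z → G.Adj g z → False := by
    intro f g z hz hf hg hfz hgz
    rw [mem_sdiff] at hz
    refine hhex _ _ (isHexagon_of_filter_eq_singleton huv hvc hcu hz.2 hf hg hfz hgz) fun k => ?_
    fin_cases k <;> simp [hv, hu, hz.1]
  have := card_add_card_mul_le_card hG hAS (fun a ha => hdeg a (hAS ha)) heven ?_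
  · rw [card_pair huv.symm] at this
    omega
  rintro a b f g z hab hz hfa hgb hfz hgz
  have ha := (mem_filter.1 (eq_singleton_iff_unique_mem.1 hfa).1).1
  have hb := (mem_filter.1 (eq_singleton_iff_unique_mem.1 hgb).1).1
  rw [mem_insert, mem_singleton] at ha hb
  rcases ha with rfl | rfl <;> rcases hb with rfl | rfl
  · exact hab rfl
  · exact hdetour f g z hz hfa hgb hfz hgz
  · exact hdetour g f z hz hgb hfa hgz hfz
  · exact hab rfl

end Cases

end SimpleGraph

/-- Let `G` be a Tanner graph in which every variable node has degree `γ ≥ 3`,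
with no 4-cycles and all 8-cycles chordless.  Then every nonempty `(a,0)` trapping
set (a set of `a` variable nodes such that every check node has an even number of
neighbours in it) satisfies `a ≥ 2γ`; hence the minimum distance is at least `2γ`. -/
theorem stmt_12 {V : Type*} [Fintype V] [DecidableEq V]
    (G : SimpleGraph V) [DecidableRel G.Adj]
    (isVar : V → Prop) [DecidablePred isVar]
    (hbip : ∀ x y, G.Adj x y → (isVar x ↔ ¬ isVar y))
    (γ : ℕ) (hγ : 3 ≤ γ)
    (hdegV : ∀ v, isVar v → G.degree v = γ)
    (h4 : ∀ (v : V) (c : G.Walk v v), c.IsCycle → c.length ≠ 4)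
    (h8 : ∀ (v : V) (c : G.Walk v v), c.IsCycle → c.length = 8 → ¬ HasChord G c)
    (S : Finset V) (hSvar : ∀ v ∈ S, isVar v) (hSne : S.Nonempty)
    (heven : ∀ w, ¬ isVar w → Even ((S.filter (fun v => G.Adj w v)).card)) :
    2 * γ ≤ S.card := by
  have hG := commonNeighbors_subsingleton_of_isCycle_length_ne_four h4
  have hdeg : ∀ a ∈ S, γ ≤ G.degree a := fun a ha => (hdegV a (hSvar a ha)).ge
  have heven' : ∀ f, ∀ a ∈ S, G.Adj f a → Even #{x ∈ S | G.Adj f x} :=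
    fun f a ha hfa => heven f fun hf => (hbip f a hfa).1 hf (hSvar a ha)
  by_cases hhex : ∃ x y, G.IsHexagon x y ∧ ∀ k, x k ∈ S
  · obtain ⟨x, y, H, hxS⟩ := hhex
    have := H.three_mul_le_card_add_three hbip h8 hG hdeg heven' hxS fun k => hSvar _ (hxS k)
    omega
  · simp only [not_exists, not_and] at hhex
    exact two_mul_le_card_of_forall_not_isHexagon hG hSne (by omega) hdeg heven' hhex
end

section
/- Let G be a variable-regular Tanner graph with column weight γ ≥ 3 and girth at least 8. Then every (a,0) trapping set whose induced subgraph contains a check node of degree at least 4 satisfies a ≥ 4γ. -/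
/-!
Fix a check node `w` with four neighbours `F` in the trapping set `S`. The other `γ - 1` check
neighbours of the nodes of `F` form a set `C` of `4 (γ - 1)` nodes, pairwise distinct because there
are no 4-cycles. Every `c ∈ C` sees an even, hence at least two, number of nodes of `S`, and at
most one of them lies in `F`; no node of `S \ F` sees two nodes of `C`, since that would close a
cycle of length 4 or 6 through `w`. Hence `|S| ≥ |F| + |C| = 4γ`.
-/

open SimpleGraph Finset

namespace SimpleGraph
variable {V : Type*} {G : SimpleGraph V} {a b c d e f : V}

lemma false_of_triangle (hG : 3 < G.egirth) (hab : G.Adj a b) (hbc : G.Adj b c)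
    (hca : G.Adj c a) : False := by
  have hcyc : (Walk.cons hab (Walk.cons hbc (Walk.cons hca Walk.nil))).IsCycle := by
    simp [Walk.cons_isCycle_iff]
    grind [Adj.ne]
  exact (egirth_le_length hcyc).not_gt (by simpa using hG)

lemma false_of_hexagon (hG : 6 < G.egirth) (hab : G.Adj a b) (hbc : G.Adj b c) (hcd : G.Adj c d)
    (hde : G.Adj d e) (hef : G.Adj e f) (hfa : G.Adj f a) (hac : a ≠ c) (hce : c ≠ e)
    (hea : e ≠ a) (hbd : b ≠ d) (hdf : d ≠ f) (hfb : f ≠ b) : False := by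
  have h3 : 3 < G.egirth := lt_trans (by norm_num) hG
  have had : a ≠ d := by rintro rfl; exact false_of_triangle h3 hab hbc hcd
  have hbe : b ≠ e := by rintro rfl; exact false_of_triangle h3 hbc hcd hde
  have hcf : c ≠ f := by rintro rfl; exact false_of_triangle h3 hcd hde hef
  have hcyc : (Walk.cons hab (Walk.cons hbc (Walk.cons hcd (Walk.cons hde
      (Walk.cons hef (Walk.cons hfa Walk.nil)))))).IsCycle := by
    simp [Walk.cons_isCycle_iff]
    grind [Adj.ne]
  exact (egirth_le_length hcyc).not_gt (by simpa using hG)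

lemma subsingleton_commonNeighbors (hG : 4 < G.egirth) {x y : V} (hxy : x ≠ y) :
    (G.commonNeighbors x y).Subsingleton := by
  intro a ha b hb
  obtain ⟨hxa, hya⟩ := G.mem_commonNeighbors.1 ha
  obtain ⟨hxb, hyb⟩ := G.mem_commonNeighbors.1 hb
  by_contra hab
  have hcyc : (Walk.cons hxa (Walk.cons hya.symm (Walk.cons hyb
      (Walk.cons hxb.symm Walk.nil)))).IsCycle := by
    simp [Walk.cons_isCycle_iff]
    grind [Adj.ne]
  exact (egirth_le_length hcyc).not_gt (by simpa using hG)

variable [DecidableEq V] [G.LocallyFinite]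

def outerNeighborFinset (w : V) (F : Finset V) : Finset V :=
  F.biUnion fun v => (G.neighborFinset v).erase w

lemma mem_outerNeighborFinset {w c : V} {F : Finset V} :
    c ∈ G.outerNeighborFinset w F ↔ ∃ v ∈ F, G.Adj v c ∧ c ≠ w := by
  simp [outerNeighborFinset, and_comm]

lemma card_outerNeighborFinset (hG : 4 < G.egirth) {w : V} {F : Finset V}
    (hF : ∀ v ∈ F, G.Adj w v) :
    #(G.outerNeighborFinset w F) = ∑ v ∈ F, (G.degree v - 1) := by
  rw [outerNeighborFinset, card_biUnion]
  · refine sum_congr rfl fun v hv => ?_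
    rw [card_erase_of_mem ((mem_neighborFinset _ _ _).2 (hF v hv).symm),
      card_neighborFinset_eq_degree]
  · intro v hv v' hv' hvv'
    rw [Function.onFun, Finset.disjoint_left]
    intro c hc hc'
    refine hvv' ?_
    rw [mem_erase, mem_neighborFinset] at hc hc'
    exact subsingleton_commonNeighbors hG hc.1.symm ⟨hF v hv, hc.2.symm⟩
      ⟨hF v' hv', hc'.2.symm⟩

lemma card_outerNeighborFinset_le_card_sdiff [DecidableRel G.Adj] (hG : 6 < G.egirth)
    {w : V} {F S : Finset V} (hF : ∀ v ∈ F, G.Adj w v) (hFS : F ⊆ S)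
    (heven : ∀ c ∈ G.outerNeighborFinset w F, Even #{y ∈ S | G.Adj c y}) :
    #(G.outerNeighborFinset w F) ≤ #(S \ F) := by
  have h4 : 4 < G.egirth := lt_trans (by norm_num) hG
  refine card_le_card_of_forall_subsingleton G.Adj (fun c hc => ?_) (fun t ht => ?_)
  · obtain ⟨v, hvF, hvc, hcw⟩ := mem_outerNeighborFinset.1 hc
    have hv : v ∈ {y ∈ S | G.Adj c y} := mem_filter.2 ⟨hFS hvF, hvc.symm⟩
    have h2 : 1 < #{y ∈ S | G.Adj c y} := by
      obtain ⟨k, hk⟩ := heven c hc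
      have := card_pos.2 ⟨v, hv⟩
      omega
    obtain ⟨y, hy, hyv⟩ := exists_mem_ne h2 v
    rw [mem_filter] at hy
    refine ⟨y, mem_sdiff.2 ⟨hy.1, fun hyF => hyv ?_⟩, hy.2⟩
    exact subsingleton_commonNeighbors h4 hcw.symm ⟨hF y hyF, hy.2⟩ ⟨hF v hvF, hvc.symm⟩
  · rintro c ⟨hc, hct⟩ c' ⟨hc', hc't⟩
    obtain ⟨-, htF⟩ := mem_sdiff.1 ht
    obtain ⟨v, hvF, hvc, hcw⟩ := mem_outerNeighborFinset.1 hc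
    obtain ⟨v', hv'F, hv'c', hc'w⟩ := mem_outerNeighborFinset.1 hc'
    by_contra hcc'
    by_cases hvv' : v = v'
    · subst hvv'
      have hvt : v = t :=
        subsingleton_commonNeighbors h4 hcc' ⟨hvc.symm, hv'c'.symm⟩ ⟨hct, hc't⟩
      exact htF (hvt ▸ hvF)
    · have hvt : v ≠ t := fun h => htF (h ▸ hvF)
      have htv' : t ≠ v' := fun h => htF (h ▸ hv'F)
      exact false_of_hexagon hG (hF v hvF) hvc hct hc't.symm hv'c'.symm (hF v' hv'F).symm
        hcw.symm hcc' hc'w hvt htv' (Ne.symm hvv')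

end SimpleGraph

theorem stmt_13_general {V : Type*} [Fintype V]
    (G : SimpleGraph V) [DecidableRel G.Adj]
    (isVar : V → Prop)
    (hbip : ∀ x y, G.Adj x y → (isVar x ↔ ¬ isVar y))
    (hg : (8 : ℕ∞) ≤ G.girth)
    (γ : ℕ)
    (hdegV : ∀ v, isVar v → G.degree v = γ)
    (S : Finset V) (hSvar : ∀ v ∈ S, isVar v)
    (heven : ∀ w, ¬ isVar w → Even ((S.filter (fun v => G.Adj w v)).card))
    (hdeg4 : ∃ w, ¬ isVar w ∧ 4 ≤ (S.filter (fun v => G.Adj w v)).card) :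
    4 * γ ≤ S.card := by
  classical
  have hg8 : 8 ≤ G.egirth := hg.trans G.egirth.natCast_toNat_le_self
  obtain ⟨w, -, hw4⟩ := hdeg4
  obtain ⟨F, hFSw, hF⟩ := exists_subset_card_eq hw4
  have hFS : F ⊆ S := hFSw.trans (filter_subset _ _)
  have hwF : ∀ v ∈ F, G.Adj w v := fun v hv => (mem_filter.1 (hFSw hv)).2
  have hC : #(G.outerNeighborFinset w F) = 4 * (γ - 1) := by
    rw [card_outerNeighborFinset (lt_of_lt_of_le (by norm_num) hg8) hwF,
      sum_congr rfl fun v hv => by rw [hdegV v (hSvar v (hFS hv))], sum_const, hF, smul_eq_mul]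
  have hCS := card_outerNeighborFinset_le_card_sdiff (lt_of_lt_of_le (by norm_num) hg8) hwF hFS
    fun c hc => by
      obtain ⟨v, hvF, hvc, -⟩ := mem_outerNeighborFinset.1 hc
      exact heven c ((hbip v c hvc).1 (hSvar v (hFS hvF)))
  have := card_sdiff_add_card_eq_card hFS
  omega

/-- Let `G` be a variable-regular Tanner graph with column weight `γ ≥ 3` and girth
at least 8.  Then every `(a,0)` trapping set whose induced subgraph contains a check
node of degree at least 4 satisfies `a ≥ 4γ`. -/
theorem stmt_13 {V : Type*} [Fintype V] [DecidableEq V]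
    (G : SimpleGraph V) [DecidableRel G.Adj]
    (isVar : V → Prop) [DecidablePred isVar]
    (hbip : ∀ x y, G.Adj x y → (isVar x ↔ ¬ isVar y))
    (hg : (8 : ℕ∞) ≤ G.girth)
    (γ : ℕ) (hγ : 3 ≤ γ)
    (hdegV : ∀ v, isVar v → G.degree v = γ)
    (S : Finset V) (hSvar : ∀ v ∈ S, isVar v)
    (heven : ∀ w, ¬ isVar w → Even ((S.filter (fun v => G.Adj w v)).card))
    (hdeg4 : ∃ w, ¬ isVar w ∧ 4 ≤ (S.filter (fun v => G.Adj w v)).card) :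
    4 * γ ≤ S.card :=
  stmt_13_general G isVar hbip hg γ hdegV S hSvar heven hdeg4
end

section
/- Let G be an irregular Tanner graph whose variable-node degrees all lie in {d1,...,dℓ} with minimum degree d1 = γ, with no 4-cycles and all 8-cycles chordless. Then every (a,b) elementary trapping set with b < a satisfies a ≥ 2γ − 2. -/
open SimpleGraph Finset

/-!
Since a degree-1 check has a single neighbour and `b < a`, some variable `v` meets no
degree-1 check. Without 4-cycles, distinct checks at `v` lead to distinct variables, so `v`
has at least `γ` variables at distance two. If each of these carries two degree-1 checks,
they account for `2γ ≤ b < a` of them. Otherwise one of them, `u`, has at most one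
degree-1 check and hence at least `γ - 1` variables at distance two. Two such variables
`x, y` shared with `v` would close an 8-cycle `v - x - u - y - v` having the check joining
`v` and `u` as a chord, so `a ≥ γ + (γ - 1) - 1`.
-/

namespace SimpleGraph

variable {V : Type*} {G : SimpleGraph V}

theorem Walk.isCycle_cons_of_support_nodup {u v : V} (h : G.Adj u v) (p : G.Walk v u)
    (hp : p.support.Nodup) (hlen : 2 ≤ p.length) : (Walk.cons h p).IsCycle :=
  isCycle_iff_isPath_tail_and_le_length.mpr ⟨by simpa [isPath_def] using hp, by simp; omega⟩

theorem eq_of_adj_of_adj_of_no_four_cycles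
    (h4 : ∀ (v : V) (c : G.Walk v v), c.IsCycle → c.length ≠ 4) {v u c c' : V} (hvu : v ≠ u)
    (hvc : G.Adj v c) (huc : G.Adj u c) (hvc' : G.Adj v c') (huc' : G.Adj u c') : c = c' := by
  by_contra hcc'
  refine h4 v (.cons hvc (.cons huc.symm (.cons huc' (.cons hvc'.symm .nil))))
    (Walk.isCycle_cons_of_support_nodup _ _ ?_ (by simp)) rfl
  simp only [Walk.support_cons, Walk.support_nil, List.nodup_cons, List.mem_cons,
    List.not_mem_nil, List.nodup_nil]
  grind [Adj.ne]

theorem eq_of_adj_of_degree_eq_one [Fintype V] [DecidableRel G.Adj] {c p q : V}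
    (hc : G.degree c = 1) (hp : G.Adj c p) (hq : G.Adj c q) : p = q :=
  (degree_eq_one_iff_existsUnique_adj.mp hc).unique hp hq

theorem eq_or_eq_of_adj_of_degree_le_two [Fintype V] [DecidableRel G.Adj] [DecidableEq V]
    {c p q r : V} (hc : G.degree c ≤ 2) (hp : G.Adj c p) (hq : G.Adj c q) (hpq : p ≠ q)
    (hr : G.Adj c r) : r = p ∨ r = q := by
  by_contra! hne
  have hsub : ({p, q, r} : Finset V) ⊆ G.neighborFinset c := by
    simp [insert_subset_iff, hp, hq, hr]
  have := card_le_card hsub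
  rw [card_neighborFinset_eq_degree, card_insert_of_notMem (by simp [hpq, hne.1.symm]),
    card_pair hne.2.symm] at this
  omega

variable (G) [Fintype V] [DecidableRel G.Adj]

def leafNeighborFinset (v : V) : Finset V := {c ∈ G.neighborFinset v | G.degree c = 1}

def twoStepNeighborFinset [DecidableEq V] (v : V) : Finset V :=
  {z | z ≠ v ∧ ∃ c, G.Adj c v ∧ G.Adj c z}

variable {G}

theorem disjoint_leafNeighborFinset {u v : V} (huv : u ≠ v) :
    Disjoint (G.leafNeighborFinset u) (G.leafNeighborFinset v) := by
  rw [Finset.disjoint_left]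
  simp only [leafNeighborFinset, mem_filter, mem_neighborFinset]
  exact fun c hu hv => huv (eq_of_adj_of_degree_eq_one hu.2 hu.1.symm hv.1.symm)

theorem degree_le_card_leafNeighborFinset_add_card_twoStepNeighborFinset [DecidableEq V]
    (h4 : ∀ (v : V) (c : G.Walk v v), c.IsCycle → c.length ≠ 4) (v : V) :
    G.degree v ≤ #(G.leafNeighborFinset v) + #(G.twoStepNeighborFinset v) := by
  rw [← card_neighborFinset_eq_degree,
    ← card_filter_add_card_filter_not (s := G.neighborFinset v) (fun c => G.degree c = 1)]
  refine Nat.add_le_add_left (card_le_card_of_forall_subsingleton G.Adj ?_ ?_) _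
  · intro c hc
    simp only [mem_filter, mem_neighborFinset] at hc
    obtain ⟨hvc, hdeg⟩ := hc
    have hcard : 1 < #(G.neighborFinset c) := by
      have := hvc.degree_pos_right
      rw [card_neighborFinset_eq_degree]
      omega
    obtain ⟨z, hcz, hzv⟩ := exists_mem_ne hcard v
    rw [mem_neighborFinset] at hcz
    exact ⟨z, by simpa [twoStepNeighborFinset] using ⟨hzv, c, hvc.symm, hcz⟩, hcz⟩
  · intro z hz c₁ hc₁ c₂ hc₂
    simp only [twoStepNeighborFinset, mem_filter, mem_univ, true_and] at hz
    simp only [Set.mem_ofPred_eq, mem_filter, mem_neighborFinset] at hc₁ hc₂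
    exact eq_of_adj_of_adj_of_no_four_cycles h4 hz.1.symm hc₁.1.1 hc₁.2.symm hc₂.1.1 hc₂.2.symm

variable {isVar : V → Prop}

theorem isVar_of_mem_twoStepNeighborFinset [DecidableEq V]
    (hbip : ∀ x y, G.Adj x y → (isVar x ↔ ¬ isVar y)) {v z : V} (hv : isVar v)
    (hz : z ∈ G.twoStepNeighborFinset v) : isVar z := by
  obtain ⟨-, c, hcv, hcz⟩ := by simpa [twoStepNeighborFinset] using hz
  exact not_not.mp fun hnz => (hbip c v hcv).mp ((hbip c z hcz).mpr hnz) hv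

theorem sum_card_leafNeighborFinset_le [DecidableEq V] [DecidablePred isVar]
    (hbip : ∀ x y, G.Adj x y → (isVar x ↔ ¬ isVar y)) (S : Finset V) (hS : ∀ u ∈ S, isVar u) :
    ∑ u ∈ S, #(G.leafNeighborFinset u) ≤ #{w | ¬ isVar w ∧ G.degree w = 1} := by
  rw [← card_biUnion fun u _ u' _ h => disjoint_leafNeighborFinset h]
  refine card_le_card fun c hc => ?_
  obtain ⟨u, hu, hc⟩ := mem_biUnion.mp hc
  simp only [leafNeighborFinset, mem_filter, mem_neighborFinset] at hc
  simpa using ⟨(hbip u c hc.1).mp (hS u hu), hc.2⟩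

theorem exists_isVar_leafNeighborFinset_eq_empty [DecidableEq V] [DecidablePred isVar]
    (hbip : ∀ x y, G.Adj x y → (isVar x ↔ ¬ isVar y))
    (hlt : #{w | ¬ isVar w ∧ G.degree w = 1} < #(univ.filter isVar)) :
    ∃ v, isVar v ∧ G.leafNeighborFinset v = ∅ := by
  by_contra! h
  have hone : #(univ.filter isVar) • 1 ≤ ∑ v ∈ univ.filter isVar, #(G.leafNeighborFinset v) :=
    card_nsmul_le_sum _ _ _ fun v hv => card_pos.mpr (h v (mem_filter.mp hv).2)
  have := sum_card_leafNeighborFinset_le hbip (univ.filter isVar) fun v hv => (mem_filter.mp hv).2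
  rw [smul_eq_mul, mul_one] at hone
  omega

theorem card_twoStepNeighborFinset_inter_le_one [DecidableEq V]
    (hbip : ∀ x y, G.Adj x y → (isVar x ↔ ¬ isVar y))
    (hdeg : ∀ c, ¬ isVar c → G.degree c ≤ 2)
    (h8 : ∀ (v : V) (c : G.Walk v v), c.IsCycle → c.length = 8 → ¬ HasChord G c)
    {v u : V} (hv : isVar v) (hu : u ∈ G.twoStepNeighborFinset v) :
    #(G.twoStepNeighborFinset v ∩ G.twoStepNeighborFinset u) ≤ 1 := by
  rw [card_le_one]
  intro x hx y hy
  rw [mem_inter] at hx hy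
  have hu_var := isVar_of_mem_twoStepNeighborFinset hbip hv hu
  have hx_var := isVar_of_mem_twoStepNeighborFinset hbip hv hx.1
  have hy_var := isVar_of_mem_twoStepNeighborFinset hbip hv hy.1
  simp only [twoStepNeighborFinset, mem_filter, mem_univ, true_and] at hu hx hy
  obtain ⟨huv, c₀, hc₀v, hc₀u⟩ := hu
  obtain ⟨⟨hxv, c₁, hc₁v, hc₁x⟩, hxu, c₂, hc₂u, hc₂x⟩ := hx
  obtain ⟨⟨hyv, c₄, hc₄v, hc₄y⟩, hyu, c₃, hc₃u, hc₃y⟩ := hy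
  by_contra hxy
  -- The checks `c₀, …, c₄` join different pairs of variables and have only two neighbours
  -- each, hence are pairwise distinct; this is what makes `W` a cycle with chord `c₀`.
  have hcheck : ∀ {c z}, G.Adj c z → isVar z → ¬ isVar c := fun h hz hc => (hbip _ _ h).mp hc hz
  have hc₀ := hcheck hc₀v hv
  have hc₁ := hcheck hc₁v hv
  have hc₂ := hcheck hc₂u hu_var
  have hc₃ := hcheck hc₃u hu_var
  have hc₄ := hcheck hc₄v hv
  have hc₀_nbr : ∀ r, G.Adj c₀ r → r = v ∨ r = u := fun r =>
    eq_or_eq_of_adj_of_degree_le_two (hdeg c₀ hc₀) hc₀v hc₀u (Ne.symm huv)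
  have hc₁_nbr : ∀ r, G.Adj c₁ r → r = v ∨ r = x := fun r =>
    eq_or_eq_of_adj_of_degree_le_two (hdeg c₁ hc₁) hc₁v hc₁x (Ne.symm hxv)
  have hc₂_nbr : ∀ r, G.Adj c₂ r → r = u ∨ r = x := fun r =>
    eq_or_eq_of_adj_of_degree_le_two (hdeg c₂ hc₂) hc₂u hc₂x (Ne.symm hxu)
  have hc₃_nbr : ∀ r, G.Adj c₃ r → r = u ∨ r = y := fun r =>
    eq_or_eq_of_adj_of_degree_le_two (hdeg c₃ hc₃) hc₃u hc₃y (Ne.symm hyu)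
  have hc₄_nbr : ∀ r, G.Adj c₄ r → r = v ∨ r = y := fun r =>
    eq_or_eq_of_adj_of_degree_le_two (hdeg c₄ hc₄) hc₄v hc₄y (Ne.symm hyv)
  let W : G.Walk v v := .cons hc₁v.symm (.cons hc₁x (.cons hc₂x.symm (.cons hc₂u
    (.cons hc₃u.symm (.cons hc₃y (.cons hc₄y.symm (.cons hc₄v .nil)))))))
  refine h8 v W ?_ rfl (Or.inr ⟨c₀, ?_, v, by simp [W], u, by simp [W], Ne.symm huv, hc₀v, hc₀u⟩)
  · refine Walk.isCycle_cons_of_support_nodup _ _ ?_ (by simp)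
    simp only [Walk.support_cons, Walk.support_nil, List.nodup_cons, List.mem_cons,
      List.not_mem_nil, List.nodup_nil, or_false, not_or]
    and_intros <;> grind
  · simp only [W, Walk.support_cons, Walk.support_nil, List.mem_cons, List.not_mem_nil]
    grind

end SimpleGraph

theorem stmt_16_general {V : Type*} [Fintype V] [DecidableEq V]
    (G : SimpleGraph V) [DecidableRel G.Adj]
    (isVar : V → Prop) [DecidablePred isVar]
    (hbip : ∀ x y, G.Adj x y → (isVar x ↔ ¬ isVar y))
    (D : Finset ℕ) (γ : ℕ) (hγmin : ∀ d ∈ D, γ ≤ d)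
    (hdegV : ∀ v, isVar v → G.degree v ∈ D)
    (hdegC : ∀ w, ¬ isVar w → G.degree w = 1 ∨ G.degree w = 2)
    (h4 : ∀ (v : V) (c : G.Walk v v), c.IsCycle → c.length ≠ 4)
    (h8 : ∀ (v : V) (c : G.Walk v v), c.IsCycle → c.length = 8 → ¬ HasChord G c)
    (a b : ℕ)
    (ha : a = (univ.filter isVar).card)
    (hb : b = (univ.filter (fun w => ¬ isVar w ∧ G.degree w = 1)).card)
    (hba : b < a) :
    2 * γ - 2 ≤ a := by
  have hγ : ∀ w, isVar w → γ ≤ G.degree w := fun w hw => hγmin _ (hdegV w hw)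
  have hdeg := degree_le_card_leafNeighborFinset_add_card_twoStepNeighborFinset h4
  have hNvar : ∀ {w z}, isVar w → z ∈ G.twoStepNeighborFinset w → isVar z :=
    isVar_of_mem_twoStepNeighborFinset hbip
  set N := G.twoStepNeighborFinset
  obtain ⟨v, hv, hvleaf⟩ := exists_isVar_leafNeighborFinset_eq_empty hbip (hb ▸ ha ▸ hba)
  have hNv : γ ≤ #(N v) := by
    have := hdeg v
    rw [hvleaf, card_empty] at this
    exact (hγ v hv).trans (by omega)
  by_cases hcase : ∀ u ∈ N v, 2 ≤ #(G.leafNeighborFinset u)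
  · have hleaves := card_nsmul_le_sum _ _ _ hcase
    have := sum_card_leafNeighborFinset_le hbip _ fun u hu => hNvar hv hu
    rw [smul_eq_mul] at hleaves
    omega
  · push Not at hcase
    obtain ⟨u, hu, hu1⟩ := hcase
    have hinter : #(N v ∩ N u) ≤ 1 := card_twoStepNeighborFinset_inter_le_one hbip
      (fun c hc => by rcases hdegC c hc with h | h <;> omega) h8 hv hu
    have hunion : #(N v ∪ N u) ≤ a := ha ▸ card_le_card (union_subset
      (fun z hz => mem_filter.mpr ⟨mem_univ z, hNvar hv hz⟩)
      (fun z hz => mem_filter.mpr ⟨mem_univ z, hNvar (hNvar hv hu) hz⟩))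
    have := card_union_add_card_inter (N v) (N u)
    have := hdeg u
    have := hγ u (hNvar hv hu)
    omega

/-- Let `G` be an irregular Tanner graph whose variable-node degrees all lie in a
set `D` with minimum element `γ`, with no 4-cycles and all 8-cycles chordless.  Then
every `(a,b)` elementary trapping set (check nodes of degree 1 or 2, `b` of degree 1)
with `b < a` satisfies `a ≥ 2γ − 2`. -/
theorem stmt_16 {V : Type*} [Fintype V] [DecidableEq V]
    (G : SimpleGraph V) [DecidableRel G.Adj]
    (isVar : V → Prop) [DecidablePred isVar]
    (hbip : ∀ x y, G.Adj x y → (isVar x ↔ ¬ isVar y))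
    (D : Finset ℕ) (γ : ℕ) (hγD : γ ∈ D) (hγmin : ∀ d ∈ D, γ ≤ d)
    (hdegV : ∀ v, isVar v → G.degree v ∈ D)
    (hdegC : ∀ w, ¬ isVar w → G.degree w = 1 ∨ G.degree w = 2)
    (h4 : ∀ (v : V) (c : G.Walk v v), c.IsCycle → c.length ≠ 4)
    (h8 : ∀ (v : V) (c : G.Walk v v), c.IsCycle → c.length = 8 → ¬ HasChord G c)
    (a b : ℕ)
    (ha : a = (univ.filter isVar).card)
    (hb : b = (univ.filter (fun w => ¬ isVar w ∧ G.degree w = 1)).card)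
    (hba : b < a) :
    2 * γ - 2 ≤ a :=
  stmt_16_general G isVar hbip D γ hγmin hdegV hdegC h4 h8 a b ha hb hba
end

section
/- Let B be the exponent matrix of a compact QC-LDPC code with lifting degree N, defined by a column vector B1 = (0, 1, b_2, ..., b_{γ−1}) over Z_N and coefficients 0 = γ_0, 1 = γ_1, γ_2, ..., γ_{n−1} in Z_N, so that column j of B equals γ_j · B1 (mod N). If for every three distinct entries p, q, r of B1 and all 0 ≤ i, j ≤ n−1 with i ≠ j, none of (p+q−2r)(γ_i−γ_j), (p+r−2q)(γ_i−γ_j), (q+r−2p)(γ_i−γ_j) is ≡ 0 mod N, then no 3×3 submatrix of B gives rise to an 8-cycle with a chord in the lifted Tanner graph. -/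
/-- The alternating sum `(M i₁ j₁ − M i₁ j₂) + (M i₂ j₂ − M i₂ j₃) + (M i₃ j₃ − M i₃ j₁)`
associated with a 6-cycle pattern of a `3 × 3` submatrix of an exponent matrix `M`. -/
def eVal (N : ℕ) (M : ℕ → ℕ → ZMod N) (i1 i2 i3 j1 j2 j3 : ℕ) : ZMod N :=
  (M i1 j1 - M i1 j2) + (M i2 j2 - M i2 j3) + (M i3 j3 - M i3 j1)

/-- The `3 × 3` submatrix of `M` on rows `i1 i2 i3` and columns `j1 j2 j3` gives rise
to an 8-cycle with a chord: one of the nine pairs of its six 6-cycle alternating sums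
`e1, …, e6` sharing a common difference term consists of two zero values. -/
def CausesChordedEightCycle (N : ℕ) (M : ℕ → ℕ → ZMod N) (i1 i2 i3 j1 j2 j3 : ℕ) : Prop :=
  let e1 := eVal N M i1 i2 i3 j1 j2 j3
  let e2 := eVal N M i1 i2 i3 j1 j3 j2
  let e3 := eVal N M i1 i2 i3 j2 j3 j1
  let e4 := eVal N M i1 i2 i3 j3 j2 j1
  let e5 := eVal N M i1 i2 i3 j3 j1 j2
  let e6 := eVal N M i1 i2 i3 j2 j1 j3
  (e1 = 0 ∧ e6 = 0) ∨ (e1 = 0 ∧ e2 = 0) ∨ (e1 = 0 ∧ e4 = 0) ∨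
  (e2 = 0 ∧ e5 = 0) ∨ (e2 = 0 ∧ e3 = 0) ∨ (e3 = 0 ∧ e4 = 0) ∨
  (e3 = 0 ∧ e6 = 0) ∨ (e4 = 0 ∧ e5 = 0) ∨ (e5 = 0 ∧ e6 = 0)

/-- Compact QC-LDPC construction: the `γ × n` exponent matrix has `(i,j)` entry
`B1 i * g j (mod N)`, where `B1 = (0, 1, b₂, …, b_{γ−1})` and the coefficients are
`g = (0, 1, γ₂, …, γ_{n−1})`.  If for all three distinct entries `p, q, r` of `B1`
and all distinct coefficient indices `i ≠ j`, none of `(p+q−2r)(γᵢ−γⱼ)`,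
`(p+r−2q)(γᵢ−γⱼ)`, `(q+r−2p)(γᵢ−γⱼ)` is `≡ 0 (mod N)`, then no `3 × 3` submatrix
of the exponent matrix gives rise to an 8-cycle with a chord. -/
theorem stmt_19 (N γ n : ℕ) (B1 : ℕ → ZMod N) (g : ℕ → ZMod N)
    (hB10 : B1 0 = 0) (hB11 : B1 1 = 1) (hg0 : g 0 = 0) (hg1 : g 1 = 1)
    (h : ∀ p q r, p < γ → q < γ → r < γ → p ≠ q → p ≠ r → q ≠ r →
      ∀ i j, i < n → j < n → i ≠ j →
        (B1 p + B1 q - 2 * B1 r) * (g i - g j) ≠ 0 ∧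
        (B1 p + B1 r - 2 * B1 q) * (g i - g j) ≠ 0 ∧
        (B1 q + B1 r - 2 * B1 p) * (g i - g j) ≠ 0) :
    ∀ i1 i2 i3 j1 j2 j3, i1 < γ → i2 < γ → i3 < γ → j1 < n → j2 < n → j3 < n →
      i1 ≠ i2 → i1 ≠ i3 → i2 ≠ i3 → j1 ≠ j2 → j1 ≠ j3 → j2 ≠ j3 →
      ¬ CausesChordedEightCycle N (fun i j => B1 i * g j) i1 i2 i3 j1 j2 j3 := by
  intro i1 i2 i3 j1 j2 j3 hi1 hi2 hi3 hj1 hj2 hj3 h12 h13 h23 k12 k13 k23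
  simp only [CausesChordedEightCycle, eVal]
  rintro (⟨ha, hb⟩ | ⟨ha, hb⟩ | ⟨ha, hb⟩ | ⟨ha, hb⟩ | ⟨ha, hb⟩ | ⟨ha, hb⟩ | ⟨ha, hb⟩ |
    ⟨ha, hb⟩ | ⟨ha, hb⟩)
  · exact (h i2 i3 i1 hi2 hi3 hi1 h23 h12.symm h13.symm j1 j2 hj1 hj2 k12).1
      (by linear_combination hb - ha)
  · exact (h i1 i3 i2 hi1 hi3 hi2 h13 h12 h23.symm j3 j2 hj3 hj2 k23.symm).1
      (by linear_combination ha - hb)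
  · exact (h i1 i2 i3 hi1 hi2 hi3 h12 h13 h23 j1 j3 hj1 hj3 k13).1
      (by linear_combination ha - hb)
  · exact (h i2 i3 i1 hi2 hi3 hi1 h23 h12.symm h13.symm j3 j1 hj3 hj1 k13.symm).1
      (by linear_combination ha - hb)
  · exact (h i1 i2 i3 hi1 hi2 hi3 h12 h13 h23 j1 j2 hj1 hj2 k12).1
      (by linear_combination ha - hb)
  · exact (h i2 i3 i1 hi2 hi3 hi1 h23 h12.symm h13.symm j3 j2 hj3 hj2 k23.symm).1
      (by linear_combination ha - hb)
  · exact (h i1 i3 i2 hi1 hi3 hi2 h13 h12 h23.symm j1 j3 hj1 hj3 k13).1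
      (by linear_combination ha - hb)
  · exact (h i1 i3 i2 hi1 hi3 hi2 h13 h12 h23.symm j1 j2 hj1 hj2 k12).1
      (by linear_combination ha - hb)
  · exact (h i1 i2 i3 hi1 hi2 hi3 h12 h13 h23 j3 j2 hj3 hj2 k23.symm).1
      (by linear_combination ha - hb)
end
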